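/- arXiv:2008.03365 — 5 statements merged into one kernel-verified Lean document; each statement's English description precedes it below -/
import Mathlib

section
/- Assume Φ and ω are compatible and X = {x_1,…,x_n} is a sampling set for Φ. For any data y ∈ ℝⁿ, the minimum weighted norm interpolants f_p (p_X ≤ p < ∞) converge to f_∞ in L^q_μ(Ω) as p → ∞, for every 2 ≤ q ≤ ∞. If in addition μ(Ω) < ∞, the convergence also holds in L^q_μ(Ω) for every 1 ≤ q < 2. -/
/-!
The interpolants are finite combinations `f_p = ∑ⱼ c_{p,j} K_p(·,x_j)` with `c_p = 𝐊_p⁻¹ y`.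
The matrix `𝐊` is positive definite: its quadratic form is `∑_k ω_k⁻¹ (∑ᵢ vᵢ φ_k(xᵢ))²`, and on a
sampling set the inner sums vanish for every `k` only when `v = 0`. Hence `c_p → 𝐊⁻¹ y`. Each column
`K_p(·,y)` converges to `K(·,y)` in `L^∞` by uniform convergence of the kernel series, and in `L²`
because it is the orthonormal expansion with coefficients `ω_k⁻¹ φ_k(y)`, square-summable as
`ω_k → ∞`. The other exponents follow by interpolating between `L²` and `L^∞`, and, on a finite
measure space, by Hölder's inequality below `2`.
-/

open MeasureTheory Filter Finset Matrix
open scoped ENNReal BigOperators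

noncomputable section

/-- Truncated kernel `K_p(x,y) = ∑_{k<p} ω_k⁻¹ φ_k(x) φ_k(y)`. -/
def Kpart {Ω : Type*} (ω : ℕ → ℝ) (φ : ℕ → Ω → ℝ) (p : ℕ) (x y : Ω) : ℝ :=
  ∑ k ∈ Finset.range p, (ω k)⁻¹ * φ k x * φ k y

/-- The matrix `𝐊_p = (K_p(x_i,x_j))`. -/
def KpartMat {Ω : Type*} (ω : ℕ → ℝ) (φ : ℕ → Ω → ℝ) {n : ℕ} (X : Fin n → Ω) (p : ℕ) :
    Matrix (Fin n) (Fin n) ℝ :=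
  Matrix.of fun i j => Kpart ω φ p (X i) (X j)

/-- The matrix `𝐊 = (K(x_i,x_j))`. -/
def KMat {Ω : Type*} (K : Ω → Ω → ℝ) {n : ℕ} (X : Fin n → Ω) : Matrix (Fin n) (Fin n) ℝ :=
  Matrix.of fun i j => K (X i) (X j)

/-- The minimum weighted norm interpolant `f_p(x) = ∑_k K_p(x,x_k) (𝐊_p⁻¹ y)_k`. -/
def interpP {Ω : Type*} (ω : ℕ → ℝ) (φ : ℕ → Ω → ℝ) {n : ℕ} (X : Fin n → Ω)
    (y : Fin n → ℝ) (p : ℕ) (x : Ω) : ℝ :=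
  ∑ j, Kpart ω φ p x (X j) * ((KpartMat ω φ X p)⁻¹ *ᵥ y) j

/-- The limiting interpolant `f_∞(x) = ∑_k K(x,x_k) (𝐊⁻¹ y)_k`. -/
def interpInf {Ω : Type*} (K : Ω → Ω → ℝ) {n : ℕ} (X : Fin n → Ω)
    (y : Fin n → ℝ) (x : Ω) : ℝ :=
  ∑ j, K x (X j) * ((KMat K X)⁻¹ *ᵥ y) j

open Topology

section LpConvergence

variable {α E : Type*} [MeasurableSpace α] {μ : Measure α} [NormedAddCommGroup E]

theorem eLpNorm_le_eLpNorm_top_rpow_mul_eLpNorm_rpow {f : α → E} (hf : AEStronglyMeasurable f μ)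
    {p q : ℝ≥0∞} (hp : p ≠ 0) (hpq : p ≤ q) (hq : q ≠ ∞) :
    eLpNorm f q μ
      ≤ eLpNorm f ∞ μ ^ (1 - p.toReal / q.toReal) * eLpNorm f p μ ^ (p.toReal / q.toReal) := by
  have hp_top : p ≠ ∞ := ne_top_of_le_ne_top hq hpq
  have hr : 0 < p.toReal := ENNReal.toReal_pos hp hp_top
  have hrs : p.toReal ≤ q.toReal := ENNReal.toReal_mono hq hpq
  rw [eLpNorm_eq_lintegral_rpow_enorm_toReal (ne_bot_of_le_ne_bot hp hpq) hq,
    eLpNorm_eq_lintegral_rpow_enorm_toReal hp hp_top, eLpNorm_exponent_top]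
  set A := eLpNormEssSup f μ
  have hlintegral : ∫⁻ x, ‖f x‖ₑ ^ q.toReal ∂μ
      ≤ A ^ (q.toReal - p.toReal) * ∫⁻ x, ‖f x‖ₑ ^ p.toReal ∂μ := by
    rw [← lintegral_const_mul'' _ (hf.enorm.pow_const _)]
    refine lintegral_mono_ae ?_
    filter_upwards [enorm_ae_le_eLpNormEssSup f μ] with x hx
    calc ‖f x‖ₑ ^ q.toReal = ‖f x‖ₑ ^ (q.toReal - p.toReal) * ‖f x‖ₑ ^ p.toReal := by
          rw [← ENNReal.rpow_add_of_nonneg _ _ (sub_nonneg.2 hrs) hr.le, sub_add_cancel]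
      _ ≤ A ^ (q.toReal - p.toReal) * ‖f x‖ₑ ^ p.toReal := by gcongr
  calc (∫⁻ x, ‖f x‖ₑ ^ q.toReal ∂μ) ^ (1 / q.toReal)
      ≤ (A ^ (q.toReal - p.toReal) * ∫⁻ x, ‖f x‖ₑ ^ p.toReal ∂μ) ^ (1 / q.toReal) := by
        gcongr
    _ = _ := by
        rw [ENNReal.mul_rpow_of_nonneg _ _ (by positivity), ← ENNReal.rpow_mul, ← ENNReal.rpow_mul]
        congr 2 <;> field_simp [(hr.trans_le hrs).ne']

variable {ι : Type*} {l : Filter ι} {f : ι → α → E}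

theorem tendsto_eLpNorm_of_tendsto_eLpNorm_top (hf : ∀ i, AEStronglyMeasurable (f i) μ)
    {p q : ℝ≥0∞} (hp : p ≠ 0) (hpq : p ≤ q)
    (h_p : Tendsto (fun i => eLpNorm (f i) p μ) l (𝓝 0))
    (h_top : Tendsto (fun i => eLpNorm (f i) ∞ μ) l (𝓝 0)) :
    Tendsto (fun i => eLpNorm (f i) q μ) l (𝓝 0) := by
  obtain rfl | hq := eq_or_ne q ∞
  · exact h_top
  set θ := p.toReal / q.toReal
  have hθ : 0 < θ := div_pos (ENNReal.toReal_pos hp (ne_top_of_le_ne_top hq hpq))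
    (ENNReal.toReal_pos (ne_bot_of_le_ne_bot hp hpq) hq)
  have hθ_le : θ ≤ 1 := div_le_one_of_le₀ (ENNReal.toReal_mono hq hpq) ENNReal.toReal_nonneg
  have h_pθ : Tendsto (fun i => eLpNorm (f i) p μ ^ θ) l (𝓝 0) := by
    simpa [ENNReal.zero_rpow_of_pos hθ, Function.comp_def] using
      ((ENNReal.continuous_rpow_const (y := θ)).tendsto 0).comp h_p
  refine tendsto_of_tendsto_of_tendsto_of_le_of_le' tendsto_const_nhds h_pθ
    (Eventually.of_forall fun _ => zero_le) ?_
  filter_upwards [h_top.eventually (ge_mem_nhds zero_lt_one)] with i hi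
  calc eLpNorm (f i) q μ ≤ eLpNorm (f i) ∞ μ ^ (1 - θ) * eLpNorm (f i) p μ ^ θ :=
        eLpNorm_le_eLpNorm_top_rpow_mul_eLpNorm_rpow (hf i) hp hpq hq
    _ ≤ eLpNorm (f i) p μ ^ θ :=
        mul_le_of_le_one_left zero_le (ENNReal.rpow_le_one hi (sub_nonneg.2 hθ_le))

theorem tendsto_eLpNorm_of_tendsto_eLpNorm_of_le [IsFiniteMeasure μ]
    (hf : ∀ i, AEStronglyMeasurable (f i) μ) {p q : ℝ≥0∞} (hpq : p ≤ q)
    (h_q : Tendsto (fun i => eLpNorm (f i) q μ) l (𝓝 0)) :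
    Tendsto (fun i => eLpNorm (f i) p μ) l (𝓝 0) := by
  obtain rfl | hμ := eq_or_ne μ 0
  · simpa using tendsto_const_nhds
  have hC : μ Set.univ ^ (1 / p.toReal - 1 / q.toReal) ≠ ∞ :=
    ENNReal.rpow_ne_top_of_ne_zero (Measure.measure_univ_ne_zero.2 hμ) (measure_ne_top μ _)
  refine tendsto_of_tendsto_of_tendsto_of_le_of_le tendsto_const_nhds
    (by simpa using ENNReal.Tendsto.mul_const h_q (Or.inr hC)) (fun _ => zero_le)
    fun i => eLpNorm_le_eLpNorm_mul_rpow_measure_univ hpq (hf i)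

theorem tendsto_eLpNorm_top_sub_of_tendstoUniformly {F : ι → α → E} {g : α → E}
    (h : TendstoUniformly F g l) :
    Tendsto (fun i => eLpNorm (fun x => g x - F i x) ∞ μ) l (𝓝 0) := by
  refine ENNReal.nhds_zero_basis.tendsto_right_iff.2 fun ε hε => ?_
  obtain ⟨δ, -, hδ, hδε⟩ := ENNReal.lt_iff_exists_real_btwn.1 hε
  filter_upwards [Metric.tendstoUniformly_iff.1 h δ (ENNReal.ofReal_pos.1 hδ)] with i hi
  rw [eLpNorm_exponent_top]
  refine (eLpNormEssSup_le_of_ae_bound (Eventually.of_forall fun x => ?_)).trans_lt hδε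
  rw [← dist_eq_norm]
  exact (hi x).le

theorem tendsto_eLpNorm_mul_sub {q : ℝ≥0∞} (hq : 1 ≤ q) {g : ι → α → ℝ} {G : α → ℝ}
    {c : ι → ℝ} {C : ℝ} (hg : ∀ i, AEStronglyMeasurable (g i) μ) (hG : MemLp G q μ)
    (hgG : Tendsto (fun i => eLpNorm (fun x => G x - g i x) q μ) l (𝓝 0))
    (hcC : Tendsto c l (𝓝 C)) :
    Tendsto (fun i => eLpNorm (fun x => g i x * c i - G x * C) q μ) l (𝓝 0) := by
  have hsplit (i : ι) : (fun x => g i x * c i - G x * C)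
      = c i • (g i - G) + (c i - C) • G := by
    ext x; simp only [Pi.add_apply, Pi.sub_apply, Pi.smul_apply, smul_eq_mul]; ring
  have hbound (i : ι) : eLpNorm (fun x => g i x * c i - G x * C) q μ
      ≤ ‖c i‖ₑ * eLpNorm (fun x => G x - g i x) q μ + ‖c i - C‖ₑ * eLpNorm G q μ := by
    rw [hsplit]
    refine (eLpNorm_add_le (((hg i).sub hG.1).const_smul _) (hG.1.const_smul _) hq).trans_eq ?_
    rw [eLpNorm_const_smul, eLpNorm_const_smul, eLpNorm_sub_comm]
    rfl
  have hlim : Tendsto (fun i => ‖c i‖ₑ * eLpNorm (fun x => G x - g i x) q μ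
      + ‖c i - C‖ₑ * eLpNorm G q μ) l (𝓝 0) := by
    simpa using (ENNReal.Tendsto.mul hcC.enorm (Or.inr ENNReal.zero_ne_top) hgG
      (Or.inr enorm_ne_top)).add
      (ENNReal.Tendsto.mul_const (hcC.sub_const C).enorm (Or.inr hG.eLpNorm_ne_top))
  exact tendsto_of_tendsto_of_tendsto_of_le_of_le tendsto_const_nhds hlim (fun _ => zero_le) hbound

theorem tendsto_eLpNorm_sum_mul_sub {κ : Type*} [Fintype κ] {q : ℝ≥0∞} (hq : 1 ≤ q)
    {g : ι → κ → α → ℝ} {G : κ → α → ℝ} {c : ι → κ → ℝ} {C : κ → ℝ}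
    (hg : ∀ i j, AEStronglyMeasurable (g i j) μ) (hG : ∀ j, MemLp (G j) q μ)
    (hgG : ∀ j, Tendsto (fun i => eLpNorm (fun x => G j x - g i j x) q μ) l (𝓝 0))
    (hcC : ∀ j, Tendsto (fun i => c i j) l (𝓝 (C j))) :
    Tendsto (fun i => eLpNorm (fun x => ∑ j, g i j x * c i j - ∑ j, G j x * C j) q μ) l (𝓝 0) := by
  set T : ι → κ → α → ℝ := fun i j x => g i j x * c i j - G j x * C j
  have hbound (i : ι) : eLpNorm (fun x => ∑ j, g i j x * c i j - ∑ j, G j x * C j) q μ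
      ≤ ∑ j, eLpNorm (T i j) q μ := by
    calc _ = eLpNorm (∑ j, T i j) q μ := by
          congr 1; ext x; simp [T, Finset.sum_apply, Finset.sum_sub_distrib]
      _ ≤ _ := eLpNorm_sum_le (fun j _ => ((hg i j).mul_const _).sub ((hG j).1.mul_const _)) hq
  have hlim : Tendsto (fun i => ∑ j, eLpNorm (T i j) q μ) l (𝓝 0) := by
    simpa using tendsto_finsetSum _ fun j _ =>
      tendsto_eLpNorm_mul_sub hq (fun i => hg i j) (hG j) (hgG j) (hcC j)
  exact tendsto_of_tendsto_of_tendsto_of_le_of_le tendsto_const_nhds hlim (fun _ => zero_le) hbound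

end LpConvergence

namespace OrthonormalExpansion

variable {α : Type*} [MeasurableSpace α] {μ : Measure α} {φ : ℕ → α → ℝ}
  (hφ : ∀ k, AEStronglyMeasurable (φ k) μ)
  (hortho : ∀ j k, ∫ x, φ j x * φ k x ∂μ = if j = k then 1 else 0)
include hφ hortho

theorem memLp_two (k : ℕ) : MemLp (φ k) 2 μ := by
  rw [memLp_two_iff_integrable_sq (hφ k)]
  by_contra h
  have := hortho k k
  rw [if_pos rfl, integral_undef (by simpa [sq] using h)] at this
  exact zero_ne_one this

theorem integral_sq_sum (s : Finset ℕ) (a : ℕ → ℝ) :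
    ∫ x, (∑ k ∈ s, a k * φ k x) ^ 2 ∂μ = ∑ k ∈ s, a k ^ 2 := by
  have hint (k l : ℕ) : Integrable (fun x => a k * a l * (φ k x * φ l x)) μ :=
    ((memLp_two hφ hortho k).integrable_mul (memLp_two hφ hortho l)).const_mul _
  have expand (x : α) : (∑ k ∈ s, a k * φ k x) ^ 2
      = ∑ k ∈ s, ∑ l ∈ s, a k * a l * (φ k x * φ l x) := by
    rw [sq, Finset.sum_mul_sum]
    exact Finset.sum_congr rfl fun k _ => Finset.sum_congr rfl fun l _ => by ring
  simp_rw [expand]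
  rw [integral_finsetSum _ fun k _ => integrable_finsetSum _ fun l _ => hint k l]
  refine Finset.sum_congr rfl fun k hk => ?_
  rw [integral_finsetSum _ fun l _ => hint k l]
  simp_rw [integral_const_mul, hortho, mul_ite, mul_one, mul_zero, Finset.sum_ite_eq s k,
    if_pos hk, sq]

theorem eLpNorm_two_sum (s : Finset ℕ) (a : ℕ → ℝ) :
    eLpNorm (fun x => ∑ k ∈ s, a k * φ k x) 2 μ = ENNReal.ofReal √(∑ k ∈ s, a k ^ 2) := by
  have hmem : MemLp (fun x => ∑ k ∈ s, a k * φ k x) 2 μ :=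
    memLp_finsetSum s fun k _ => (memLp_two hφ hortho k).const_mul _
  rw [hmem.eLpNorm_eq_integral_rpow_norm two_ne_zero ENNReal.ofNat_ne_top,
    ← integral_sq_sum hφ hortho s a, Real.sqrt_eq_rpow]
  simp

-- Fatou's lemma, applied to differences of partial sums, whose `L²` norms `eLpNorm_two_sum` gives.
theorem eLpNorm_two_sub_sum_range_le {c : ℕ → ℝ} {F : α → ℝ} (hc : Summable fun k => c k ^ 2)
    (hF : ∀ x, HasSum (fun k => c k * φ k x) (F x)) (p : ℕ) :
    eLpNorm (fun x => F x - ∑ k ∈ range p, c k * φ k x) 2 μ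
      ≤ ENNReal.ofReal √(∑' k, c (k + p) ^ 2) := by
  refine Lp.eLpNorm_le_of_ae_tendsto (u := atTop)
    (f := fun q x => ∑ k ∈ range q, c k * φ k x - ∑ k ∈ range p, c k * φ k x) ?_
    (fun q => (Finset.aestronglyMeasurable_fun_sum _ fun k _ => (hφ k).const_mul _).sub
      (Finset.aestronglyMeasurable_fun_sum _ fun k _ => (hφ k).const_mul _))
    (ae_of_all _ fun x => ((hF x).tendsto_sum_nat).sub_const _)
  filter_upwards [eventually_ge_atTop p] with q hpq
  simp_rw [← Finset.sum_Ico_eq_sub _ hpq, eLpNorm_two_sum hφ hortho]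
  gcongr
  rw [Finset.sum_Ico_eq_sum_range]
  simp_rw [add_comm p]
  exact ((summable_nat_add_iff p).mpr hc).sum_le_tsum _ fun k _ => sq_nonneg _

theorem tendsto_eLpNorm_two_sub_sum_range {c : ℕ → ℝ} {F : α → ℝ}
    (hc : Summable fun k => c k ^ 2) (hF : ∀ x, HasSum (fun k => c k * φ k x) (F x)) :
    Tendsto (fun p => eLpNorm (fun x => F x - ∑ k ∈ range p, c k * φ k x) 2 μ) atTop (𝓝 0) := by
  have htail : Tendsto (fun p => ENNReal.ofReal √(∑' k, c (k + p) ^ 2)) atTop (𝓝 0) := by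
    simpa using (ENNReal.tendsto_ofReal (tendsto_sum_nat_add fun k => c k ^ 2).sqrt)
  exact tendsto_of_tendsto_of_tendsto_of_le_of_le tendsto_const_nhds htail (fun _ => zero_le)
    (eLpNorm_two_sub_sum_range_le hφ hortho hc hF)

theorem memLp_two_of_hasSum {c : ℕ → ℝ} {F : α → ℝ} (hc : Summable fun k => c k ^ 2)
    (hF : ∀ x, HasSum (fun k => c k * φ k x) (F x)) : MemLp F 2 μ := by
  refine ⟨aestronglyMeasurable_of_tendsto_ae atTop
    (fun q => Finset.aestronglyMeasurable_fun_sum (range q) fun k _ => (hφ k).const_mul (c k))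
    (ae_of_all _ fun x => (hF x).tendsto_sum_nat), ?_⟩
  simpa using (eLpNorm_two_sub_sum_range_le hφ hortho hc hF 0).trans_lt ENNReal.ofReal_lt_top

end OrthonormalExpansion

namespace MercerKernel

variable {Ω : Type*} {ω : ℕ → ℝ} {φ : ℕ → Ω → ℝ} {K : Ω → Ω → ℝ}

theorem eq_zero_of_forall_sum_mul_eq_zero {n : ℕ} {X : Fin n → Ω} {pX : ℕ}
    (hpX : ∀ y : Fin n → ℝ, ∃ c : ℕ → ℝ, ∀ j, ∑ k ∈ range pX, c k * φ k (X j) = y j)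
    {v : Fin n → ℝ} (hv : ∀ k, ∑ i, v i * φ k (X i) = 0) : v = 0 := by
  obtain ⟨c, hc⟩ := hpX v
  refine dotProduct_self_eq_zero.1 ?_
  calc v ⬝ᵥ v = ∑ i, v i * ∑ k ∈ range pX, c k * φ k (X i) := by simp_rw [hc]; rfl
    _ = ∑ k ∈ range pX, c k * ∑ i, v i * φ k (X i) := by
        simp_rw [Finset.mul_sum]
        rw [Finset.sum_comm]
        exact Finset.sum_congr rfl fun k _ => Finset.sum_congr rfl fun i _ => by ring
    _ = 0 := by simp [hv]

theorem Kpart_eq_sum (p : ℕ) (x y : Ω) :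
    Kpart ω φ p x y = ∑ k ∈ range p, ((ω k)⁻¹ * φ k y) * φ k x :=
  Finset.sum_congr rfl fun _ _ => by ring

variable (hKsum : ∀ x y : Ω, HasSum (fun k => (ω k)⁻¹ * φ k x * φ k y) (K x y))
include hKsum

theorem hasSum_dotProduct_KMat_mulVec {n : ℕ} (X : Fin n → Ω) (v : Fin n → ℝ) :
    HasSum (fun k => (ω k)⁻¹ * (∑ i, v i * φ k (X i)) ^ 2) (v ⬝ᵥ (KMat K X *ᵥ v)) := by
  have h : HasSum (fun k => ∑ i, ∑ j, v i * v j * ((ω k)⁻¹ * φ k (X i) * φ k (X j)))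
      (∑ i, ∑ j, v i * v j * K (X i) (X j)) :=
    hasSum_sum fun i _ => hasSum_sum fun j _ => (hKsum (X i) (X j)).mul_left (v i * v j)
  convert h using 1
  · ext k
    simp_rw [sq, Finset.sum_mul_sum, Finset.mul_sum]
    exact Finset.sum_congr rfl fun i _ => Finset.sum_congr rfl fun j _ => by ring
  · simp_rw [dotProduct, mulVec, KMat, dotProduct, Matrix.of_apply, Finset.mul_sum]
    exact Finset.sum_congr rfl fun i _ => Finset.sum_congr rfl fun j _ => by ring

theorem posDef_KMat (hωpos : ∀ k, 0 < ω k) {n : ℕ} {X : Fin n → Ω} {pX : ℕ}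
    (hpX : ∀ y : Fin n → ℝ, ∃ c : ℕ → ℝ, ∀ j, ∑ k ∈ range pX, c k * φ k (X j) = y j) :
    (KMat K X).PosDef := by
  refine .of_dotProduct_mulVec_pos ?_ fun v hv => ?_
  · ext i j
    simp only [conjTranspose_apply, star_trivial, KMat, of_apply]
    exact (hKsum (X j) (X i)).unique (by simpa only [mul_right_comm] using hKsum (X i) (X j))
  have hnonneg (k : ℕ) : 0 ≤ (ω k)⁻¹ * (∑ i, v i * φ k (X i)) ^ 2 := by
    have := hωpos k; positivity
  have hsum := hasSum_dotProduct_KMat_mulVec hKsum X v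
  refine (hsum.nonneg hnonneg).lt_of_ne fun h => hv ?_
  refine eq_zero_of_forall_sum_mul_eq_zero hpX fun k => ?_
  have := congrFun ((hasSum_zero_iff_of_nonneg hnonneg).1 (h ▸ hsum)) k
  simpa [(hωpos k).ne'] using this

theorem tendsto_KpartMat_inv_mulVec {n : ℕ} {X : Fin n → Ω} (hK : IsUnit (KMat K X))
    (y : Fin n → ℝ) :
    Tendsto (fun p => (KpartMat ω φ X p)⁻¹ *ᵥ y) atTop (𝓝 ((KMat K X)⁻¹ *ᵥ y)) := by
  have hmat : Tendsto (KpartMat ω φ X) atTop (𝓝 (KMat K X)) :=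
    tendsto_pi_nhds.2 fun i => tendsto_pi_nhds.2 fun j => (hKsum (X i) (X j)).tendsto_sum_nat
  have hinv : ContinuousAt Inv.inv (KMat K X) := by
    refine continuousAt_matrix_inv _ ?_
    rw [Ring.inverse_eq_inv']
    exact continuousAt_inv₀ ((isUnit_iff_isUnit_det _).1 hK).ne_zero
  exact ((continuous_id.matrix_mulVec continuous_const).tendsto _).comp (hinv.tendsto.comp hmat)

theorem summable_inv_mul_sq (hωpos : ∀ k, 0 < ω k) (hωtop : Tendsto ω atTop atTop) (y : Ω) :
    Summable fun k => ((ω k)⁻¹ * φ k y) ^ 2 := by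
  refine .of_norm_bounded_eventually_nat (hKsum y y).summable ?_
  -- Once `ω k ≥ 1`, the term is dominated by the diagonal term of the series for `K y y`.
  filter_upwards [hωtop.eventually_ge_atTop 1] with k hk
  have hω_inv : (ω k)⁻¹ ≤ 1 := inv_le_one_of_one_le₀ hk
  have h_nonneg : 0 ≤ (ω k)⁻¹ * φ k y * φ k y := by
    rw [mul_assoc]; exact mul_nonneg (inv_nonneg.2 (hωpos k).le) (mul_self_nonneg _)
  rw [Real.norm_eq_abs, abs_sq]
  calc ((ω k)⁻¹ * φ k y) ^ 2 = (ω k)⁻¹ * ((ω k)⁻¹ * φ k y * φ k y) := by ring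
    _ ≤ (ω k)⁻¹ * φ k y * φ k y := mul_le_of_le_one_left h_nonneg hω_inv

section L2

variable [MeasurableSpace Ω] {μ : Measure Ω} (hφ : ∀ k, AEStronglyMeasurable (φ k) μ)
  (hortho : ∀ j k, ∫ x, φ j x * φ k x ∂μ = if j = k then 1 else 0)
  (hωpos : ∀ k, 0 < ω k) (hωtop : Tendsto ω atTop atTop)
include hφ hortho hωpos hωtop

theorem memLp_two_K (y : Ω) : MemLp (fun x => K x y) 2 μ :=
  OrthonormalExpansion.memLp_two_of_hasSum hφ hortho (summable_inv_mul_sq hKsum hωpos hωtop y)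
    fun x => by simpa only [mul_right_comm] using hKsum x y

theorem tendsto_eLpNorm_two_K_sub_Kpart (y : Ω) :
    Tendsto (fun p => eLpNorm (fun x => K x y - Kpart ω φ p x y) 2 μ) atTop (𝓝 0) := by
  simp_rw [Kpart_eq_sum]
  exact OrthonormalExpansion.tendsto_eLpNorm_two_sub_sum_range hφ hortho
    (summable_inv_mul_sq hKsum hωpos hωtop y) fun x => by
      simpa only [mul_right_comm] using hKsum x y

end L2

end MercerKernel

theorem min_norm_interpolants_converge_general
    {Ω : Type*} [MetricSpace Ω] [MeasurableSpace Ω] [BorelSpace Ω] (μ : Measure Ω)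
    (φ : ℕ → Ω → ℝ) (hφcont : ∀ k, Continuous (φ k))
    (hortho : ∀ j k, ∫ x, φ j x * φ k x ∂μ = if j = k then 1 else 0)
    (ω : ℕ → ℝ) (hωpos : ∀ k, 0 < ω k) (hωtop : Tendsto ω atTop atTop)
    (K : Ω → Ω → ℝ)
    (hKsum : ∀ x y : Ω, HasSum (fun k => (ω k)⁻¹ * φ k x * φ k y) (K x y))
    (hKunif : TendstoUniformly (fun p (z : Ω × Ω) => Kpart ω φ p z.1 z.2)
      (fun z => K z.1 z.2) atTop)
    (hKbdd : ∃ M : ℝ, ∀ x y : Ω, |K x y| ≤ M)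
    {n : ℕ} (X : Fin n → Ω)
    (pX : ℕ)
    (hpX : ∀ y : Fin n → ℝ, ∃ c : ℕ → ℝ, ∀ j, ∑ k ∈ Finset.range pX, c k * φ k (X j) = y j)
    (y : Fin n → ℝ) :
    (∀ q : ℝ≥0∞, 2 ≤ q →
      Tendsto (fun p => eLpNorm (fun x => interpP ω φ X y p x - interpInf K X y x) q μ)
        atTop (nhds 0)) ∧
    (μ Set.univ < ⊤ → ∀ q : ℝ≥0∞, 1 ≤ q → q < 2 →
      Tendsto (fun p => eLpNorm (fun x => interpP ω φ X y p x - interpInf K X y x) q μ)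
        atTop (nhds 0)) := by
  have hφ (k : ℕ) : AEStronglyMeasurable (φ k) μ := (hφcont k).aestronglyMeasurable
  have hK2 (j : Fin n) : MemLp (fun x => K x (X j)) 2 μ :=
    MercerKernel.memLp_two_K hKsum hφ hortho hωpos hωtop (X j)
  obtain ⟨M, hM⟩ := hKbdd
  have hKtop (j : Fin n) : MemLp (fun x => K x (X j)) ∞ μ :=
    memLp_top_of_bound (hK2 j).1 M (ae_of_all _ fun x => hM x (X j))
  have hKp (p : ℕ) (j : Fin n) : AEStronglyMeasurable (fun x => Kpart ω φ p x (X j)) μ := by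
    simp_rw [MercerKernel.Kpart_eq_sum]
    exact Finset.aestronglyMeasurable_fun_sum _ fun k _ => (hφ k).const_mul _
  have hcoef := tendsto_pi_nhds.1 (MercerKernel.tendsto_KpartMat_inv_mulVec hKsum
    (MercerKernel.posDef_KMat hKsum hωpos hpX).isUnit y)
  have h2 : Tendsto (fun p => eLpNorm (fun x => interpP ω φ X y p x - interpInf K X y x) 2 μ)
      atTop (nhds 0) :=
    tendsto_eLpNorm_sum_mul_sub one_le_two hKp hK2
      (fun j => MercerKernel.tendsto_eLpNorm_two_K_sub_Kpart hKsum hφ hortho hωpos hωtop (X j))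
      hcoef
  have htop : Tendsto (fun p => eLpNorm (fun x => interpP ω φ X y p x - interpInf K X y x) ∞ μ)
      atTop (nhds 0) :=
    tendsto_eLpNorm_sum_mul_sub le_top hKp hKtop
      (fun j => tendsto_eLpNorm_top_sub_of_tendstoUniformly (hKunif.comp fun x => (x, X j)))
      hcoef
  have hmeas (p : ℕ) : AEStronglyMeasurable
      (fun x => interpP ω φ X y p x - interpInf K X y x) μ :=
    (Finset.aestronglyMeasurable_fun_sum _ fun j _ => (hKp p j).mul_const _).sub
      (Finset.aestronglyMeasurable_fun_sum _ fun j _ => (hK2 j).1.mul_const _)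
  refine ⟨fun q hq => tendsto_eLpNorm_of_tendsto_eLpNorm_top hmeas two_ne_zero hq h2 htop,
    fun hμ q _ hq => ?_⟩
  have : IsFiniteMeasure μ := ⟨hμ⟩
  exact tendsto_eLpNorm_of_tendsto_eLpNorm_of_le hmeas hq.le h2

/-- If `Φ` and `ω` are compatible and `X` is a sampling set for `Φ`, then for any
data `y`, the minimum weighted norm interpolants `f_p` converge to `f_∞` in `L^q_μ(Ω)` for every
`2 ≤ q ≤ ∞`, and if moreover `μ(Ω) < ∞`, also for every `1 ≤ q < 2`. -/
theorem min_norm_interpolants_converge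
    {Ω : Type*} [MetricSpace Ω] [MeasurableSpace Ω] [BorelSpace Ω] (μ : Measure Ω)
    (hμpos : ∀ U : Set Ω, IsOpen U → U.Nonempty → 0 < μ U)
    (Ωm : ℕ → Set Ω) (hΩcpt : ∀ m, IsCompact (Ωm m)) (hΩmono : Monotone Ωm)
    (hΩfin : ∀ m, μ (Ωm m) < ⊤) (hΩunion : (⋃ m, Ωm m) = Set.univ)
    (φ : ℕ → Ω → ℝ) (hφcont : ∀ k, Continuous (φ k))
    (hortho : ∀ j k, ∫ x, φ j x * φ k x ∂μ = if j = k then 1 else 0)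
    (ω : ℕ → ℝ) (hωpos : ∀ k, 0 < ω k) (hωtop : Tendsto ω atTop atTop)
    (K : Ω → Ω → ℝ)
    (hKabs : ∀ x y : Ω, Summable fun k => |(ω k)⁻¹ * φ k x * φ k y|)
    (hKsum : ∀ x y : Ω, HasSum (fun k => (ω k)⁻¹ * φ k x * φ k y) (K x y))
    (hKunif : TendstoUniformly (fun p (z : Ω × Ω) => Kpart ω φ p z.1 z.2)
      (fun z => K z.1 z.2) atTop)
    (hKbdd : ∃ M : ℝ, ∀ x y : Ω, |K x y| ≤ M)
    (hKcont : Continuous fun z : Ω × Ω => K z.1 z.2)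
    (hKL2 : MemLp (fun z : Ω × Ω => K z.1 z.2) 2 (μ.prod μ))
    {n : ℕ} (X : Fin n → Ω) (hXinj : Function.Injective X)
    (pX : ℕ)
    (hpX : ∀ y : Fin n → ℝ, ∃ c : ℕ → ℝ, ∀ j, ∑ k ∈ Finset.range pX, c k * φ k (X j) = y j)
    (y : Fin n → ℝ) :
    (∀ q : ℝ≥0∞, 2 ≤ q →
      Tendsto (fun p => eLpNorm (fun x => interpP ω φ X y p x - interpInf K X y x) q μ)
        atTop (nhds 0)) ∧
    (μ Set.univ < ⊤ → ∀ q : ℝ≥0∞, 1 ≤ q → q < 2 →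
      Tendsto (fun p => eLpNorm (fun x => interpP ω φ X y p x - interpInf K X y x) q μ)
        atTop (nhds 0)) :=
  min_norm_interpolants_converge_general μ φ hφcont hortho ω hωpos hωtop K hKsum hKunif hKbdd X pX
    hpX y
end
end

section
/- Assume Φ and ω are compatible and X = {x_1,…,x_n} is a sampling set for Φ. For any data y ∈ ℝⁿ, any p ≥ p_X, and any 2 ≤ q ≤ ∞, the minimum weighted norm interpolants satisfy the quantitative bound ‖f_p − f_∞‖_{L^q_μ(Ω)} ≤ C_K^{1−1/q} (sup_{k≥1} ω_k⁻¹)^{1/q} n^{3/2} α_p ‖𝐊_p⁻¹‖₂ ‖𝐊⁻¹‖₂ ‖y‖₂ + α_p^{1−1/q} (sup_{k>p} ω_k⁻¹)^{1/q} n^{1/2} ‖𝐊_p⁻¹‖₂ ‖y‖₂, where ‖·‖₂ denotes the spectral norm of a matrix and the Euclidean norm of a vector. -/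
open MeasureTheory Filter Finset Matrix
open scoped ENNReal BigOperators

noncomputable section

/-- Spectral (`ℓ²→ℓ²` operator) norm of a real square matrix. -/
def specNorm {n : ℕ} (A : Matrix (Fin n) (Fin n) ℝ) : ℝ :=
  ‖Matrix.toEuclideanCLM (𝕜 := ℝ) A‖

/-- Euclidean norm of a vector. -/
def vecNorm {n : ℕ} (y : Fin n → ℝ) : ℝ :=
  Real.sqrt (∑ j, (y j) ^ 2)

/-- `α_p := sup_{x,y ∈ Ω} |K(x,y) − K_p(x,y)|`. -/
def alphaP {Ω : Type*} (K : Ω → Ω → ℝ) (ω : ℕ → ℝ) (φ : ℕ → Ω → ℝ) (p : ℕ) : ℝ :=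
  ⨆ z : Ω × Ω, |K z.1 z.2 - Kpart ω φ p z.1 z.2|

/-- `C_K := sup_{x ∈ Ω} K(x,x)`. -/
def CK {Ω : Type*} (K : Ω → Ω → ℝ) : ℝ :=
  ⨆ x : Ω, K x x

/-!
Write `c = 𝐊_p⁻¹ y` and `d = 𝐊_p⁻¹ y - 𝐊⁻¹ y = 𝐊_p⁻¹ (𝐊 - 𝐊_p) 𝐊⁻¹ y`, so that
`f_p - f_∞ = ∑ⱼ K(·, xⱼ) dⱼ - ∑ⱼ (K - K_p)(·, xⱼ) cⱼ`.
The sections `K(·, a)` are bounded by `C_K` and, by orthonormality of the expansion,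
`‖K(·, a)‖₂² = ∑ₖ ω_k⁻² φ_k(a)² ≤ (sup ω_k⁻¹) K(a, a)`; likewise the tails `(K - K_p)(·, a)` are
bounded by `α_p` and have squared `L²` norm at most `(sup_{k ≥ p} ω_k⁻¹) α_p`.
The interpolation `‖u‖_q ≤ ‖u‖_∞^{1-2/q} ‖u‖₂^{2/q}` turns these into the `L^q` bounds, and the
`ℓ¹` norms of `c` and `d` are at most `√n` times their Euclidean norms, with `‖𝐊 - 𝐊_p‖₂ ≤ n α_p`.
The sampling property makes the Gram matrices `𝐊_p` (`p ≥ p_X`) and `𝐊` positive definite.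
-/

section Norms

variable {n : ℕ}

lemma vecNorm_eq_norm_toLp (v : Fin n → ℝ) : vecNorm v = ‖WithLp.toLp 2 v‖ := by
  simp [vecNorm, EuclideanSpace.norm_eq, sq_abs]

lemma vecNorm_nonneg (v : Fin n → ℝ) : 0 ≤ vecNorm v := Real.sqrt_nonneg _

lemma specNorm_nonneg (A : Matrix (Fin n) (Fin n) ℝ) : 0 ≤ specNorm A := norm_nonneg _

lemma vecNorm_mulVec_le (A : Matrix (Fin n) (Fin n) ℝ) (v : Fin n → ℝ) :
    vecNorm (A *ᵥ v) ≤ specNorm A * vecNorm v := by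
  rw [vecNorm_eq_norm_toLp, vecNorm_eq_norm_toLp]
  exact (toEuclideanCLM (𝕜 := ℝ) A).le_opNorm (WithLp.toLp 2 v)

lemma sum_abs_le_sqrt_mul_vecNorm (v : Fin n → ℝ) : ∑ j, |v j| ≤ √n * vecNorm v := by
  have h := Finset.sum_mul_sq_le_sq_mul_sq Finset.univ (fun _ => (1 : ℝ)) (fun j => |v j|)
  simp only [one_mul, one_pow, sq_abs, Finset.sum_const, Finset.card_univ, Fintype.card_fin,
    nsmul_eq_mul, mul_one] at h
  rw [vecNorm, ← Real.sqrt_mul (Nat.cast_nonneg n)]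
  exact Real.le_sqrt_of_sq_le h

lemma vecNorm_le_of_abs_le {v : Fin n → ℝ} {b : ℝ} (hb : 0 ≤ b) (h : ∀ i, |v i| ≤ b) :
    vecNorm v ≤ √n * b := by
  have hsq : ∑ i, v i ^ 2 ≤ n * b ^ 2 :=
    calc ∑ i, v i ^ 2 ≤ ∑ _i : Fin n, b ^ 2 := by
          refine Finset.sum_le_sum fun i _ => ?_
          rw [← sq_abs]
          exact pow_le_pow_left₀ (abs_nonneg _) (h i) 2
      _ = n * b ^ 2 := by simp
  rw [vecNorm, ← Real.sqrt_sq hb, ← Real.sqrt_mul (Nat.cast_nonneg n)]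
  exact Real.sqrt_le_sqrt hsq

lemma specNorm_le_of_abs_le {A : Matrix (Fin n) (Fin n) ℝ} {a : ℝ} (ha : 0 ≤ a)
    (h : ∀ i j, |A i j| ≤ a) : specNorm A ≤ n * a := by
  refine ContinuousLinearMap.opNorm_le_bound _ (by positivity) fun x => ?_
  obtain ⟨v, rfl⟩ : ∃ v, WithLp.toLp 2 v = x := ⟨x.ofLp, rfl⟩
  change ‖WithLp.toLp 2 (A *ᵥ v)‖ ≤ _
  rw [← vecNorm_eq_norm_toLp, ← vecNorm_eq_norm_toLp]
  have hrow : ∀ i, |(A *ᵥ v) i| ≤ a * (√n * vecNorm v) := fun i =>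
    calc |(A *ᵥ v) i| = |∑ j, A i j * v j| := rfl
      _ ≤ ∑ j, |A i j| * |v j| := by
          simpa only [abs_mul] using Finset.abs_sum_le_sum_abs (fun j => A i j * v j) univ
      _ ≤ ∑ j, a * |v j| := by gcongr; exact h _ _
      _ ≤ a * (√n * vecNorm v) := by
          rw [← Finset.mul_sum]; gcongr; exact sum_abs_le_sqrt_mul_vecNorm v
  calc vecNorm (A *ᵥ v) ≤ √n * (a * (√n * vecNorm v)) :=
        vecNorm_le_of_abs_le (by have := vecNorm_nonneg v; positivity) hrow
    _ = (√n * √n) * a * vecNorm v := by ring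
    _ = n * a * vecNorm v := by rw [Real.mul_self_sqrt (Nat.cast_nonneg n)]

lemma vecNorm_inv_mulVec_sub_inv_mulVec_le {A B : Matrix (Fin n) (Fin n) ℝ} (hA : IsUnit A)
    (hB : IsUnit B) (y : Fin n → ℝ) :
    vecNorm (A⁻¹ *ᵥ y - B⁻¹ *ᵥ y) ≤ specNorm A⁻¹ * specNorm (B - A) * specNorm B⁻¹ * vecNorm y := by
  rw [← sub_mulVec, inv_sub_inv (iff_of_true hA hB), ← mulVec_mulVec, ← mulVec_mulVec]
  calc _ ≤ specNorm A⁻¹ * vecNorm ((B - A) *ᵥ (B⁻¹ *ᵥ y)) := vecNorm_mulVec_le _ _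
    _ ≤ specNorm A⁻¹ * (specNorm (B - A) * (specNorm B⁻¹ * vecNorm y)) := by
      gcongr
      · exact specNorm_nonneg _
      · exact (vecNorm_mulVec_le _ _).trans
          (mul_le_mul_of_nonneg_left (vecNorm_mulVec_le _ _) (specNorm_nonneg _))
    _ = _ := by ring

lemma sum_abs_inv_mulVec_sub_inv_mulVec_le {A B : Matrix (Fin n) (Fin n) ℝ}
    (hA : IsUnit A) (hB : IsUnit B) {a : ℝ} (ha : 0 ≤ a) (hBA : ∀ i j, |B i j - A i j| ≤ a)
    (y : Fin n → ℝ) :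
    ∑ j, |(A⁻¹ *ᵥ y - B⁻¹ *ᵥ y) j|
      ≤ √n * (specNorm A⁻¹ * (n * a) * specNorm B⁻¹ * vecNorm y) := by
  refine (sum_abs_le_sqrt_mul_vecNorm _).trans (mul_le_mul_of_nonneg_left ?_ (Real.sqrt_nonneg _))
  refine (vecNorm_inv_mulVec_sub_inv_mulVec_le hA hB y).trans ?_
  have := specNorm_nonneg A⁻¹; have := specNorm_nonneg B⁻¹; have := vecNorm_nonneg y
  gcongr
  exact specNorm_le_of_abs_le ha hBA

end Norms

section Orthonormal

variable {α : Type*} [MeasurableSpace α] {μ : Measure α} {φ : ℕ → α → ℝ}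

lemma eLpNorm_two_eq_sqrt_integral_sq {f : α → ℝ} (hf : MemLp f 2 μ) :
    eLpNorm f 2 μ = ENNReal.ofReal √(∫ x, f x ^ 2 ∂μ) := by
  rw [hf.eLpNorm_eq_integral_rpow_norm two_ne_zero ENNReal.ofNat_ne_top, Real.sqrt_eq_rpow]
  simp [Real.norm_eq_abs, sq_abs]

lemma memLp_two_of_orthonormal (hφ : ∀ k, AEStronglyMeasurable (φ k) μ)
    (hortho : ∀ j k, ∫ x, φ j x * φ k x ∂μ = if j = k then 1 else 0) (k : ℕ) :
    MemLp (φ k) 2 μ := by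
  refine (memLp_two_iff_integrable_sq (hφ k)).2 (Integrable.of_integral_ne_zero ?_)
  simp [sq, hortho k k]

lemma integral_sq_sum_of_orthonormal (hφ : ∀ k, AEStronglyMeasurable (φ k) μ)
    (hortho : ∀ j k, ∫ x, φ j x * φ k x ∂μ = if j = k then 1 else 0) (s : Finset ℕ)
    (b : ℕ → ℝ) :
    ∫ x, (∑ k ∈ s, b k * φ k x) ^ 2 ∂μ = ∑ k ∈ s, b k ^ 2 := by
  have hint : ∀ j k, Integrable (fun x => b j * b k * (φ j x * φ k x)) μ := fun j k =>
    ((memLp_two_of_orthonormal hφ hortho j).integrable_mul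
      (memLp_two_of_orthonormal hφ hortho k)).const_mul _
  have hexpand : ∀ x, (∑ k ∈ s, b k * φ k x) ^ 2
      = ∑ j ∈ s, ∑ k ∈ s, b j * b k * (φ j x * φ k x) := fun x => by
    rw [sq, Finset.sum_mul_sum]
    exact Finset.sum_congr rfl fun j _ => Finset.sum_congr rfl fun k _ => by ring
  simp_rw [hexpand]
  rw [integral_finsetSum _ fun j _ => integrable_finsetSum _ fun k _ => hint j k]
  refine Finset.sum_congr rfl fun j hj => ?_
  rw [integral_finsetSum _ fun k _ => hint j k]
  simp [integral_const_mul, hortho, hj, sq]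

lemma eLpNorm_sum_of_orthonormal (hφ : ∀ k, AEStronglyMeasurable (φ k) μ)
    (hortho : ∀ j k, ∫ x, φ j x * φ k x ∂μ = if j = k then 1 else 0) (s : Finset ℕ)
    (b : ℕ → ℝ) :
    eLpNorm (fun x => ∑ k ∈ s, b k * φ k x) 2 μ = ENNReal.ofReal √(∑ k ∈ s, b k ^ 2) := by
  rw [eLpNorm_two_eq_sqrt_integral_sq, integral_sq_sum_of_orthonormal hφ hortho]
  exact memLp_finsetSum _ fun k _ => (memLp_two_of_orthonormal hφ hortho k).const_mul _

lemma eLpNorm_le_of_hasSum_of_orthonormal (hφ : ∀ k, AEStronglyMeasurable (φ k) μ)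
    (hortho : ∀ j k, ∫ x, φ j x * φ k x ∂μ = if j = k then 1 else 0) {b : ℕ → ℝ} {B : ℝ}
    (hb : HasSum (fun k => b k ^ 2) B) {F : α → ℝ}
    (hF : ∀ x, HasSum (fun k => b k * φ k x) (F x)) :
    eLpNorm F 2 μ ≤ ENNReal.ofReal √B := by
  have hpartial : ∀ N, AEStronglyMeasurable (fun x => ∑ k ∈ range N, b k * φ k x) μ := fun N =>
    Finset.aestronglyMeasurable_fun_sum _ fun k _ => (hφ k).const_mul _
  refine (Lp.eLpNorm_lim_le_liminf_eLpNorm hpartial F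
    (ae_of_all _ fun x => (hF x).tendsto_sum_nat)).trans ?_
  refine liminf_le_of_frequently_le' (Frequently.of_forall fun N => ?_)
  rw [eLpNorm_sum_of_orthonormal hφ hortho]
  exact ENNReal.ofReal_le_ofReal (Real.sqrt_le_sqrt
    (sum_le_hasSum _ (fun k _ => sq_nonneg _) hb))

end Orthonormal

section Interpolation

variable {α : Type*} [MeasurableSpace α] {μ : Measure α}

lemma eLpNorm_le_ofReal_rpow_mul_eLpNorm_two_rpow {f : α → ℝ} {A : ℝ} (hf : ∀ x, |f x| ≤ A)
    {q : ℝ≥0∞} (hq : 2 ≤ q) :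
    eLpNorm f q μ ≤ ENNReal.ofReal A ^ (1 - (2 / q).toReal) * eLpNorm f 2 μ ^ (2 / q).toReal := by
  have hbound : ∀ x, ‖f x‖ₑ ≤ ENNReal.ofReal A := fun x => by
    rw [← ofReal_norm]; exact ENNReal.ofReal_le_ofReal (hf x)
  rcases eq_or_ne q ∞ with rfl | hqtop
  · simpa using eLpNormEssSup_le_of_ae_bound (ae_of_all _ hf)
  have hq0 : q ≠ 0 := (lt_of_lt_of_le two_pos hq).ne'
  set r := q.toReal with hr_def
  have hr : 2 ≤ r := by simpa using ENNReal.toReal_mono hqtop hq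
  have hlint : ∫⁻ x, ‖f x‖ₑ ^ r ∂μ ≤ ENNReal.ofReal A ^ (r - 2) * ∫⁻ x, ‖f x‖ₑ ^ (2 : ℝ) ∂μ := by
    rw [← lintegral_const_mul' _ _
      (ENNReal.rpow_ne_top_of_nonneg (by linarith) ENNReal.ofReal_ne_top)]
    refine lintegral_mono fun x => ?_
    calc ‖f x‖ₑ ^ r = ‖f x‖ₑ ^ (r - 2) * ‖f x‖ₑ ^ (2 : ℝ) := by
          rw [← ENNReal.rpow_add_of_nonneg _ _ (by linarith) zero_le_two, sub_add_cancel]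
      _ ≤ _ := by gcongr; exact hbound x
  rw [eLpNorm_eq_lintegral_rpow_enorm_toReal hq0 hqtop,
    eLpNorm_eq_lintegral_rpow_enorm_toReal two_ne_zero ENNReal.ofNat_ne_top]
  calc (∫⁻ x, ‖f x‖ₑ ^ r ∂μ) ^ (1 / r)
      ≤ (ENNReal.ofReal A ^ (r - 2) * ∫⁻ x, ‖f x‖ₑ ^ (2 : ℝ) ∂μ) ^ (1 / r) := by gcongr
    _ = _ := by
      rw [ENNReal.mul_rpow_of_nonneg _ _ (by positivity), ← ENNReal.rpow_mul, ← ENNReal.rpow_mul,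
        ENNReal.toReal_div, ENNReal.toReal_ofNat, ← hr_def]
      congr 2 <;> field_simp

lemma eLpNorm_le_of_abs_le_of_eLpNorm_two_le {f : α → ℝ} {A B : ℝ} (hA : 0 ≤ A) (hB : 0 ≤ B)
    (hf : ∀ x, |f x| ≤ A) (h2 : eLpNorm f 2 μ ≤ ENNReal.ofReal √(A * B)) {q : ℝ≥0∞}
    (hq : 2 ≤ q) :
    eLpNorm f q μ ≤ ENNReal.ofReal (A ^ (1 - 1 / q).toReal * B ^ (1 / q).toReal) := by
  set s := (1 / q).toReal with hs_def
  have hs : s ≤ 1 / 2 := by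
    simpa [hs_def] using ENNReal.toReal_mono (by simp) (ENNReal.div_le_div_left hq 1)
  have h2s : (2 / q).toReal = 2 * s := by
    rw [hs_def, ENNReal.toReal_div, ENNReal.toReal_div]; simp [div_eq_mul_inv]
  have h1s : (1 - 1 / q).toReal = 1 - s := by
    rw [ENNReal.toReal_sub_of_le ((ENNReal.div_le_div_left hq 1).trans (by norm_num)) (by simp)]
    simp [hs_def]
  calc eLpNorm f q μ ≤ ENNReal.ofReal A ^ (1 - 2 * s) * ENNReal.ofReal √(A * B) ^ (2 * s) := by
        rw [← h2s]; exact (eLpNorm_le_ofReal_rpow_mul_eLpNorm_two_rpow hf hq).trans (by gcongr)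
    _ = ENNReal.ofReal (A ^ (1 - 2 * s) * (A ^ s * B ^ s)) := by
        rw [ENNReal.ofReal_rpow_of_nonneg hA (by linarith),
          ENNReal.ofReal_rpow_of_nonneg (Real.sqrt_nonneg _) (by positivity),
          ← ENNReal.ofReal_mul (by positivity), Real.sqrt_eq_rpow, ← Real.rpow_mul (by positivity),
          Real.mul_rpow hA hB, one_div, inv_mul_cancel_left₀ two_ne_zero]
    _ = _ := by
        rw [h1s, ← mul_assoc, ← Real.rpow_add' hA (by linarith)]
        congr 3
        ring

lemma eLpNorm_sum_mul_le {ι : Type*} [Fintype ι] {u : ι → α → ℝ} {A B : ℝ} (hA : 0 ≤ A)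
    (hB : 0 ≤ B) (hu : ∀ j, AEStronglyMeasurable (u j) μ) (hsup : ∀ j x, |u j x| ≤ A)
    (h2 : ∀ j, eLpNorm (u j) 2 μ ≤ ENNReal.ofReal √(A * B)) (c : ι → ℝ) {q : ℝ≥0∞}
    (hq : 2 ≤ q) :
    eLpNorm (fun x => ∑ j, u j x * c j) q μ
      ≤ ENNReal.ofReal (A ^ (1 - 1 / q).toReal * B ^ (1 / q).toReal * ∑ j, |c j|) := by
  have hsum : (fun x => ∑ j, u j x * c j) = ∑ j, c j • u j := by
    funext x; simp [Finset.sum_apply, mul_comm]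
  rw [hsum]
  refine (eLpNorm_sum_le (fun j _ => (hu j).const_smul _) (one_le_two.trans hq)).trans ?_
  rw [Finset.mul_sum, ENNReal.ofReal_sum_of_nonneg fun j _ => by positivity]
  refine Finset.sum_le_sum fun j _ => ?_
  rw [eLpNorm_const_smul, mul_comm _ |c j|, ENNReal.ofReal_mul (abs_nonneg _), ← Real.norm_eq_abs,
    ofReal_norm]
  exact mul_le_mul_right (eLpNorm_le_of_abs_le_of_eLpNorm_two_le hA hB (hsup j) (h2 j) hq) _

end Interpolation

section Kernel

variable {Ω : Type*} {ω : ℕ → ℝ} {φ : ℕ → Ω → ℝ} {K : Ω → Ω → ℝ}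

lemma abs_mul_mul_le_half_add {c : ℝ} (hc : 0 ≤ c) (a b : ℝ) :
    |c * a * b| ≤ (c * a * a + c * b * b) / 2 :=
  abs_le.2 ⟨by nlinarith [mul_nonneg hc (sq_nonneg (a + b))],
    by nlinarith [mul_nonneg hc (sq_nonneg (a - b))]⟩

lemma hasSum_sub_Kpart (hKsum : ∀ x y, HasSum (fun k => (ω k)⁻¹ * φ k x * φ k y) (K x y))
    (p : ℕ) (x y : Ω) :
    HasSum (fun k => (ω (p + k))⁻¹ * φ (p + k) x * φ (p + k) y) (K x y - Kpart ω φ p x y) := by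
  have h := (hasSum_nat_add_iff' p).2 (hKsum x y)
  simp only [add_comm _ p] at h
  exact h

lemma inv_mul_mul_self_nonneg {c : ℝ} (hc : 0 < c) (a : ℝ) : 0 ≤ c⁻¹ * a * a := by
  rw [mul_assoc]; exact mul_nonneg (inv_pos.2 hc).le (mul_self_nonneg a)

lemma Kpart_self_nonneg (hωpos : ∀ k, 0 < ω k) (p : ℕ) (x : Ω) : 0 ≤ Kpart ω φ p x x :=
  Finset.sum_nonneg fun k _ => inv_mul_mul_self_nonneg (hωpos k) _

lemma sub_Kpart_self_nonneg (hωpos : ∀ k, 0 < ω k)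
    (hKsum : ∀ x y, HasSum (fun k => (ω k)⁻¹ * φ k x * φ k y) (K x y)) (p : ℕ) (x : Ω) :
    0 ≤ K x x - Kpart ω φ p x x :=
  (hasSum_sub_Kpart hKsum p x x).nonneg fun _ => inv_mul_mul_self_nonneg (hωpos _) _

lemma abs_sub_Kpart_le (hωpos : ∀ k, 0 < ω k)
    (hKsum : ∀ x y, HasSum (fun k => (ω k)⁻¹ * φ k x * φ k y) (K x y)) (p : ℕ) (x y : Ω) :
    |K x y - Kpart ω φ p x y| ≤ ((K x x - Kpart ω φ p x x) + (K y y - Kpart ω φ p y y)) / 2 := by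
  have hsum := ((hasSum_sub_Kpart hKsum p x x).add (hasSum_sub_Kpart hKsum p y y)).div_const 2
  have hterm := fun k => abs_le.1 (abs_mul_mul_le_half_add (inv_pos.2 (hωpos (p + k))).le
    (φ (p + k) x) (φ (p + k) y))
  exact abs_le.2 ⟨hasSum_le (fun k => (hterm k).1) hsum.neg (hasSum_sub_Kpart hKsum p x y),
    hasSum_le (fun k => (hterm k).2) (hasSum_sub_Kpart hKsum p x y) hsum⟩

variable [MeasurableSpace Ω] {μ : Measure Ω}

lemma eLpNorm_sub_Kpart_le (hφ : ∀ k, AEStronglyMeasurable (φ k) μ)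
    (hortho : ∀ j k, ∫ x, φ j x * φ k x ∂μ = if j = k then 1 else 0) (hωpos : ∀ k, 0 < ω k)
    (hKsum : ∀ x y, HasSum (fun k => (ω k)⁻¹ * φ k x * φ k y) (K x y)) (p : ℕ) {S : ℝ}
    (hS : ∀ k, (ω (p + k))⁻¹ ≤ S) (a : Ω) :
    eLpNorm (fun x => K x a - Kpart ω φ p x a) 2 μ
      ≤ ENNReal.ofReal √(S * (K a a - Kpart ω φ p a a)) := by
  set b : ℕ → ℝ := fun k => (ω (p + k))⁻¹ * φ (p + k) a
  have hb2 : ∀ k, b k ^ 2 ≤ S * ((ω (p + k))⁻¹ * φ (p + k) a * φ (p + k) a) := fun k =>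
    calc b k ^ 2 = (ω (p + k))⁻¹ * ((ω (p + k))⁻¹ * φ (p + k) a * φ (p + k) a) := by ring
      _ ≤ _ := mul_le_mul_of_nonneg_right (hS k) (inv_mul_mul_self_nonneg (hωpos _) _)
  have hdiag := (hasSum_sub_Kpart hKsum p a a).mul_left S
  have hsummable : Summable fun k => b k ^ 2 :=
    Summable.of_nonneg_of_le (fun k => sq_nonneg _) hb2 hdiag.summable
  refine (eLpNorm_le_of_hasSum_of_orthonormal (φ := fun k => φ (p + k)) (fun k => hφ _)
    (fun j k => by simpa using hortho (p + j) (p + k)) hsummable.hasSum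
    (fun x => ?_)).trans ?_
  · convert hasSum_sub_Kpart hKsum p x a using 2 with k
    simp only [b]; ring
  · exact ENNReal.ofReal_le_ofReal (Real.sqrt_le_sqrt (hasSum_le hb2 hsummable.hasSum hdiag))

end Kernel

section Gram

variable {Ω : Type*} {ω : ℕ → ℝ} {φ : ℕ → Ω → ℝ} {n : ℕ} {X : Fin n → Ω}

lemma dotProduct_of_mul_mul_mulVec (c : ℝ) (g v : Fin n → ℝ) :
    v ⬝ᵥ (Matrix.of (fun i j => c * g i * g j) *ᵥ v) = c * (g ⬝ᵥ v) ^ 2 := by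
  simp only [dotProduct, mulVec, of_apply, sq, Finset.mul_sum, Finset.sum_mul]
  exact Finset.sum_congr rfl fun i _ => Finset.sum_congr rfl fun j _ => by ring

lemma hasSum_dotProduct_mulVec {M : ℕ → Matrix (Fin n) (Fin n) ℝ} {L : Matrix (Fin n) (Fin n) ℝ}
    (h : ∀ i j, HasSum (fun k => M k i j) (L i j)) (v : Fin n → ℝ) :
    HasSum (fun k => v ⬝ᵥ (M k *ᵥ v)) (v ⬝ᵥ (L *ᵥ v)) := by
  simp only [dotProduct, mulVec]
  exact hasSum_sum fun i _ => (hasSum_sum fun j _ => (h i j).mul_right (v j)).mul_left (v i)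

lemma KpartMat_eq_sum (p : ℕ) :
    KpartMat ω φ X p = ∑ k ∈ range p, Matrix.of fun i j => (ω k)⁻¹ * φ k (X i) * φ k (X j) := by
  ext i j
  simp [KpartMat, Kpart, Matrix.sum_apply]

lemma dotProduct_KpartMat_mulVec (p : ℕ) (v : Fin n → ℝ) :
    v ⬝ᵥ (KpartMat ω φ X p *ᵥ v) = ∑ k ∈ range p, (ω k)⁻¹ * ((fun j => φ k (X j)) ⬝ᵥ v) ^ 2 := by
  simp only [KpartMat_eq_sum, sum_mulVec, dotProduct_sum, dotProduct_of_mul_mul_mulVec]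

lemma hasSum_dotProduct_KMat_mulVec {K : Ω → Ω → ℝ}
    (hKsum : ∀ x y, HasSum (fun k => (ω k)⁻¹ * φ k x * φ k y) (K x y)) (v : Fin n → ℝ) :
    HasSum (fun k => (ω k)⁻¹ * ((fun j => φ k (X j)) ⬝ᵥ v) ^ 2) (v ⬝ᵥ (KMat K X *ᵥ v)) := by
  simpa only [dotProduct_of_mul_mul_mulVec] using
    hasSum_dotProduct_mulVec (L := KMat K X)
      (M := fun k => Matrix.of fun i j => (ω k)⁻¹ * φ k (X i) * φ k (X j))
      (fun i j => hKsum (X i) (X j)) v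

lemma exists_dotProduct_ne_zero_of_sampling {pX : ℕ}
    (hpX : ∀ y : Fin n → ℝ, ∃ c : ℕ → ℝ, ∀ j, ∑ k ∈ range pX, c k * φ k (X j) = y j)
    {v : Fin n → ℝ} (hv : v ≠ 0) : ∃ k < pX, (fun j => φ k (X j)) ⬝ᵥ v ≠ 0 := by
  by_contra! h
  obtain ⟨c, hc⟩ := hpX v
  refine hv (dotProduct_self_eq_zero.1 ?_)
  calc v ⬝ᵥ v = ∑ j, (∑ k ∈ range pX, c k * φ k (X j)) * v j := by simp only [dotProduct, hc]
    _ = ∑ k ∈ range pX, c k * ((fun j => φ k (X j)) ⬝ᵥ v) := by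
        simp only [dotProduct, Finset.sum_mul, Finset.mul_sum]
        rw [Finset.sum_comm]
        exact Finset.sum_congr rfl fun k _ => Finset.sum_congr rfl fun j _ => by ring
    _ = 0 := Finset.sum_eq_zero fun k hk => by rw [h k (Finset.mem_range.1 hk), mul_zero]

lemma exists_weighted_sq_pos_of_sampling (hωpos : ∀ k, 0 < ω k) {pX : ℕ}
    (hpX : ∀ y : Fin n → ℝ, ∃ c : ℕ → ℝ, ∀ j, ∑ k ∈ range pX, c k * φ k (X j) = y j)
    {v : Fin n → ℝ} (hv : v ≠ 0) :
    ∃ k < pX, 0 < (ω k)⁻¹ * ((fun j => φ k (X j)) ⬝ᵥ v) ^ 2 := by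
  obtain ⟨k, hk, hne⟩ := exists_dotProduct_ne_zero_of_sampling hpX hv
  have := hωpos k
  exact ⟨k, hk, by positivity⟩

lemma posDef_KpartMat (hωpos : ∀ k, 0 < ω k) {pX p : ℕ} (hp : pX ≤ p)
    (hpX : ∀ y : Fin n → ℝ, ∃ c : ℕ → ℝ, ∀ j, ∑ k ∈ range pX, c k * φ k (X j) = y j) :
    (KpartMat ω φ X p).PosDef := by
  refine PosDef.of_dotProduct_mulVec_pos (IsHermitian.ext fun i j => ?_) fun v hv => ?_
  · simp only [KpartMat, Kpart, of_apply, star_trivial]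
    exact Finset.sum_congr rfl fun k _ => mul_right_comm _ _ _
  · obtain ⟨k, hk, hpos⟩ := exists_weighted_sq_pos_of_sampling hωpos hpX hv
    rw [star_trivial, dotProduct_KpartMat_mulVec]
    exact Finset.sum_pos' (fun k _ => by have := hωpos k; positivity)
      ⟨k, Finset.mem_range.2 (hk.trans_le hp), hpos⟩

lemma posDef_KMat (hωpos : ∀ k, 0 < ω k) {K : Ω → Ω → ℝ}
    (hKsum : ∀ x y, HasSum (fun k => (ω k)⁻¹ * φ k x * φ k y) (K x y)) {pX : ℕ}
    (hpX : ∀ y : Fin n → ℝ, ∃ c : ℕ → ℝ, ∀ j, ∑ k ∈ range pX, c k * φ k (X j) = y j) :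
    (KMat K X).PosDef := by
  refine PosDef.of_dotProduct_mulVec_pos (IsHermitian.ext fun i j => ?_) fun v hv => ?_
  · simp only [KMat, of_apply, star_trivial]
    exact (hKsum (X j) (X i)).unique ((hKsum (X i) (X j)).congr_fun fun k => mul_right_comm _ _ _)
  · obtain ⟨k₀, -, hpos⟩ := exists_weighted_sq_pos_of_sampling hωpos hpX hv
    rw [star_trivial]
    have hsum := hasSum_dotProduct_KMat_mulVec (X := X) hKsum v
    exact hasSum_lt (f := fun _ => 0) (fun k => by have := hωpos k; positivity) (i := k₀) hpos
      hasSum_zero hsum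

end Gram

lemma interpP_sub_interpInf {Ω : Type*} (ω : ℕ → ℝ) (φ : ℕ → Ω → ℝ) (K : Ω → Ω → ℝ) {n : ℕ}
    (X : Fin n → Ω) (y : Fin n → ℝ) (p : ℕ) (x : Ω) :
    interpP ω φ X y p x - interpInf K X y x
      = ∑ j, K x (X j) * ((KpartMat ω φ X p)⁻¹ *ᵥ y - (KMat K X)⁻¹ *ᵥ y) j
        - ∑ j, (K x (X j) - Kpart ω φ p x (X j)) * ((KpartMat ω φ X p)⁻¹ *ᵥ y) j := by
  simp only [interpP, interpInf, ← Finset.sum_sub_distrib, Pi.sub_apply]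
  exact Finset.sum_congr rfl fun j _ => by ring

section Compatible

variable {Ω : Type*} {ω : ℕ → ℝ} {φ : ℕ → Ω → ℝ} {K : Ω → Ω → ℝ}

lemma inv_le_iSup_inv (hωtop : Tendsto ω atTop atTop) (k : ℕ) : (ω k)⁻¹ ≤ ⨆ k, (ω k)⁻¹ :=
  le_ciSup (tendsto_inv_atTop_zero.comp hωtop).bddAbove_range k

lemma self_le_CK (hKbdd : ∃ M : ℝ, ∀ x y : Ω, |K x y| ≤ M) (x : Ω) : K x x ≤ CK K := by
  obtain ⟨M, hM⟩ := hKbdd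
  exact le_ciSup ⟨M, by rintro _ ⟨z, rfl⟩; exact (abs_le.1 (hM z z)).2⟩ x

lemma sub_Kpart_self_le_CK (hωpos : ∀ k, 0 < ω k) (hKbdd : ∃ M : ℝ, ∀ x y : Ω, |K x y| ≤ M)
    (p : ℕ) (x : Ω) : K x x - Kpart ω φ p x x ≤ CK K := by
  linarith [self_le_CK hKbdd x, Kpart_self_nonneg (φ := φ) hωpos p x]

lemma abs_sub_Kpart_le_CK (hωpos : ∀ k, 0 < ω k)
    (hKsum : ∀ x y, HasSum (fun k => (ω k)⁻¹ * φ k x * φ k y) (K x y))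
    (hKbdd : ∃ M : ℝ, ∀ x y : Ω, |K x y| ≤ M) (p : ℕ) (x y : Ω) :
    |K x y - Kpart ω φ p x y| ≤ CK K := by
  linarith [abs_sub_Kpart_le hωpos hKsum p x y, sub_Kpart_self_le_CK (φ := φ) hωpos hKbdd p x,
    sub_Kpart_self_le_CK (φ := φ) hωpos hKbdd p y]

lemma abs_le_CK (hωpos : ∀ k, 0 < ω k)
    (hKsum : ∀ x y, HasSum (fun k => (ω k)⁻¹ * φ k x * φ k y) (K x y))
    (hKbdd : ∃ M : ℝ, ∀ x y : Ω, |K x y| ≤ M) (x y : Ω) : |K x y| ≤ CK K := by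
  simpa [Kpart] using abs_sub_Kpart_le_CK hωpos hKsum hKbdd 0 x y

lemma abs_sub_Kpart_le_alphaP (hωpos : ∀ k, 0 < ω k)
    (hKsum : ∀ x y, HasSum (fun k => (ω k)⁻¹ * φ k x * φ k y) (K x y))
    (hKbdd : ∃ M : ℝ, ∀ x y : Ω, |K x y| ≤ M) (p : ℕ) (x y : Ω) :
    |K x y - Kpart ω φ p x y| ≤ alphaP K ω φ p :=
  le_ciSup (f := fun z : Ω × Ω => |K z.1 z.2 - Kpart ω φ p z.1 z.2|)
    ⟨CK K, by rintro _ ⟨z, rfl⟩; exact abs_sub_Kpart_le_CK hωpos hKsum hKbdd p z.1 z.2⟩ (x, y)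

lemma CK_nonneg (hωpos : ∀ k, 0 < ω k)
    (hKsum : ∀ x y, HasSum (fun k => (ω k)⁻¹ * φ k x * φ k y) (K x y)) : 0 ≤ CK K :=
  Real.iSup_nonneg fun x => by simpa [Kpart] using sub_Kpart_self_nonneg hωpos hKsum 0 x

lemma alphaP_nonneg (p : ℕ) : 0 ≤ alphaP K ω φ p := Real.iSup_nonneg fun _ => abs_nonneg _

variable [MeasurableSpace Ω] {μ : Measure Ω}

lemma aestronglyMeasurable_kernel_section (hφ : ∀ k, AEStronglyMeasurable (φ k) μ)
    (hKsum : ∀ x y, HasSum (fun k => (ω k)⁻¹ * φ k x * φ k y) (K x y)) (a : Ω) :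
    AEStronglyMeasurable (fun x => K x a) μ :=
  aestronglyMeasurable_of_tendsto_ae atTop
    (fun _ => Finset.aestronglyMeasurable_fun_sum _ fun k _ => ((hφ k).const_mul _).mul_const _)
    (ae_of_all _ fun x => (hKsum x a).tendsto_sum_nat)

lemma eLpNorm_kernel_section_le (hφ : ∀ k, AEStronglyMeasurable (φ k) μ)
    (hortho : ∀ j k, ∫ x, φ j x * φ k x ∂μ = if j = k then 1 else 0) (hωpos : ∀ k, 0 < ω k)
    (hωtop : Tendsto ω atTop atTop)
    (hKsum : ∀ x y, HasSum (fun k => (ω k)⁻¹ * φ k x * φ k y) (K x y))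
    (hKbdd : ∃ M : ℝ, ∀ x y : Ω, |K x y| ≤ M) (a : Ω) :
    eLpNorm (fun x => K x a) 2 μ ≤ ENNReal.ofReal √(CK K * ⨆ k, (ω k)⁻¹) := by
  have h := eLpNorm_sub_Kpart_le hφ hortho hωpos hKsum 0
    (fun k => by simpa using inv_le_iSup_inv hωtop k) a
  simp only [Kpart, Finset.range_zero, Finset.sum_empty, sub_zero] at h
  refine h.trans (ENNReal.ofReal_le_ofReal (Real.sqrt_le_sqrt ?_))
  rw [mul_comm (CK K)]
  exact mul_le_mul_of_nonneg_left (self_le_CK hKbdd a)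
    (Real.iSup_nonneg fun k => (inv_pos.2 (hωpos k)).le)

lemma eLpNorm_sub_Kpart_le_alphaP (hφ : ∀ k, AEStronglyMeasurable (φ k) μ)
    (hortho : ∀ j k, ∫ x, φ j x * φ k x ∂μ = if j = k then 1 else 0) (hωpos : ∀ k, 0 < ω k)
    (hωtop : Tendsto ω atTop atTop)
    (hKsum : ∀ x y, HasSum (fun k => (ω k)⁻¹ * φ k x * φ k y) (K x y))
    (hKbdd : ∃ M : ℝ, ∀ x y : Ω, |K x y| ≤ M) (p : ℕ) (a : Ω) :
    eLpNorm (fun x => K x a - Kpart ω φ p x a) 2 μ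
      ≤ ENNReal.ofReal √(alphaP K ω φ p * ⨆ k, (ω (p + k))⁻¹) := by
  have hshift : Tendsto (fun k => ω (p + k)) atTop atTop :=
    hωtop.comp ((tendsto_add_atTop_nat p).congr fun k => add_comm k p)
  refine (eLpNorm_sub_Kpart_le hφ hortho hωpos hKsum p (inv_le_iSup_inv hshift) a).trans
    (ENNReal.ofReal_le_ofReal (Real.sqrt_le_sqrt ?_))
  rw [mul_comm (alphaP K ω φ p)]
  exact mul_le_mul_of_nonneg_left
    ((le_abs_self _).trans (abs_sub_Kpart_le_alphaP hωpos hKsum hKbdd p a a))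
    (Real.iSup_nonneg fun k => (inv_pos.2 (hωpos _)).le)

lemma eLpNorm_interpP_sub_interpInf_le (hφ : ∀ k, AEStronglyMeasurable (φ k) μ)
    (hortho : ∀ j k, ∫ x, φ j x * φ k x ∂μ = if j = k then 1 else 0) (hωpos : ∀ k, 0 < ω k)
    (hωtop : Tendsto ω atTop atTop)
    (hKsum : ∀ x y, HasSum (fun k => (ω k)⁻¹ * φ k x * φ k y) (K x y))
    (hKbdd : ∃ M : ℝ, ∀ x y : Ω, |K x y| ≤ M) {n : ℕ} (X : Fin n → Ω) (y : Fin n → ℝ) (p : ℕ)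
    {q : ℝ≥0∞} (hq : 2 ≤ q) :
    eLpNorm (fun x => interpP ω φ X y p x - interpInf K X y x) q μ ≤ ENNReal.ofReal
      (CK K ^ (1 - 1 / q).toReal * (⨆ k, (ω k)⁻¹) ^ (1 / q).toReal *
          ∑ j, |((KpartMat ω φ X p)⁻¹ *ᵥ y - (KMat K X)⁻¹ *ᵥ y) j| +
        alphaP K ω φ p ^ (1 - 1 / q).toReal * (⨆ k, (ω (p + k))⁻¹) ^ (1 / q).toReal *
          ∑ j, |((KpartMat ω φ X p)⁻¹ *ᵥ y) j|) := by
  have hinv : ∀ k, 0 ≤ (ω k)⁻¹ := fun k => (inv_pos.2 (hωpos k)).le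
  have hC := CK_nonneg hωpos hKsum
  have hα := alphaP_nonneg (K := K) (ω := ω) (φ := φ) p
  have hS : 0 ≤ ⨆ k, (ω k)⁻¹ := Real.iSup_nonneg hinv
  have hSp : 0 ≤ ⨆ k, (ω (p + k))⁻¹ := Real.iSup_nonneg fun k => hinv (p + k)
  have hsection := aestronglyMeasurable_kernel_section hφ hKsum
  have htail : ∀ a, AEStronglyMeasurable (fun x => K x a - Kpart ω φ p x a) μ := fun a =>
    (hsection a).sub (Finset.aestronglyMeasurable_fun_sum _ fun k _ =>
      ((hφ k).const_mul _).mul_const _)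
  rw [funext (interpP_sub_interpInf ω φ K X y p),
    ENNReal.ofReal_add (by positivity) (by positivity)]
  refine (eLpNorm_sub_le ?_ ?_ (one_le_two.trans hq)).trans (add_le_add ?_ ?_)
  · exact Finset.aestronglyMeasurable_fun_sum _ fun j _ => (hsection (X j)).mul_const _
  · exact Finset.aestronglyMeasurable_fun_sum _ fun j _ => (htail (X j)).mul_const _
  · exact eLpNorm_sum_mul_le hC hS
      (fun j => hsection (X j)) (fun j x => abs_le_CK hωpos hKsum hKbdd x (X j))
      (fun j => eLpNorm_kernel_section_le hφ hortho hωpos hωtop hKsum hKbdd (X j)) _ hq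
  · exact eLpNorm_sum_mul_le hα hSp
      (fun j => htail (X j)) (fun j x => abs_sub_Kpart_le_alphaP hωpos hKsum hKbdd p x (X j))
      (fun j => eLpNorm_sub_Kpart_le_alphaP hφ hortho hωpos hωtop hKsum hKbdd p (X j)) _ hq

end Compatible

theorem min_norm_interpolants_quantitative_bound_general
    {Ω : Type*} [MetricSpace Ω] [MeasurableSpace Ω] [BorelSpace Ω] (μ : Measure Ω)
    (φ : ℕ → Ω → ℝ) (hφcont : ∀ k, Continuous (φ k))
    (hortho : ∀ j k, ∫ x, φ j x * φ k x ∂μ = if j = k then 1 else 0)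
    (ω : ℕ → ℝ) (hωpos : ∀ k, 0 < ω k) (hωtop : Tendsto ω atTop atTop)
    (K : Ω → Ω → ℝ)
    (hKsum : ∀ x y : Ω, HasSum (fun k => (ω k)⁻¹ * φ k x * φ k y) (K x y))
    (hKbdd : ∃ M : ℝ, ∀ x y : Ω, |K x y| ≤ M)
    {n : ℕ} (X : Fin n → Ω)
    (pX : ℕ)
    (hpX : ∀ y : Fin n → ℝ, ∃ c : ℕ → ℝ, ∀ j, ∑ k ∈ Finset.range pX, c k * φ k (X j) = y j)
    (y : Fin n → ℝ) :
    ∀ p : ℕ, pX ≤ p → ∀ q : ℝ≥0∞, 2 ≤ q →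
      eLpNorm (fun x => interpP ω φ X y p x - interpInf K X y x) q μ ≤
        ENNReal.ofReal
          ((CK K) ^ ((1 - 1/q).toReal) * (⨆ k : ℕ, (ω k)⁻¹) ^ ((1/q).toReal) *
              (n : ℝ) ^ ((3 : ℝ)/2) * alphaP K ω φ p *
              specNorm ((KpartMat ω φ X p)⁻¹) * specNorm ((KMat K X)⁻¹) * vecNorm y +
            (alphaP K ω φ p) ^ ((1 - 1/q).toReal) * (⨆ k : ℕ, (ω (p + k))⁻¹) ^ ((1/q).toReal) *
              (n : ℝ) ^ ((1 : ℝ)/2) * specNorm ((KpartMat ω φ X p)⁻¹) * vecNorm y) := by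
  intro p hp q hq
  have hA : IsUnit (KpartMat ω φ X p) := (posDef_KpartMat hωpos hp hpX).isUnit
  have hB : IsUnit (KMat K X) := (posDef_KMat hωpos hKsum hpX).isUnit
  have hC := CK_nonneg hωpos hKsum
  have hα := alphaP_nonneg (K := K) (ω := ω) (φ := φ) p
  have hS : 0 ≤ ⨆ k, (ω k)⁻¹ := Real.iSup_nonneg fun k => (inv_pos.2 (hωpos k)).le
  have hSp : 0 ≤ ⨆ k, (ω (p + k))⁻¹ := Real.iSup_nonneg fun k => (inv_pos.2 (hωpos _)).le
  refine (eLpNorm_interpP_sub_interpInf_le (fun k => (hφcont k).aestronglyMeasurable) hortho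
    hωpos hωtop hKsum hKbdd X y p hq).trans (ENNReal.ofReal_le_ofReal ?_)
  have hdiff := sum_abs_inv_mulVec_sub_inv_mulVec_le hA hB hα
    (fun i j => abs_sub_Kpart_le_alphaP hωpos hKsum hKbdd p (X i) (X j)) y
  have hcoeff := (sum_abs_le_sqrt_mul_vecNorm ((KpartMat ω φ X p)⁻¹ *ᵥ y)).trans
    (mul_le_mul_of_nonneg_left (vecNorm_mulVec_le _ y) (Real.sqrt_nonneg n))
  refine (add_le_add (mul_le_mul_of_nonneg_left hdiff (by positivity))
    (mul_le_mul_of_nonneg_left hcoeff (by positivity))).trans_eq ?_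
  rw [Real.sqrt_eq_rpow, show (3 : ℝ) / 2 = 1 / 2 + 1 by norm_num,
    Real.rpow_add' (Nat.cast_nonneg n) (by norm_num), Real.rpow_one]
  ring

/-- Quantitative bound on `‖f_p − f_∞‖_{L^q_μ(Ω)}` for `p ≥ p_X`, `2 ≤ q ≤ ∞`. -/
theorem min_norm_interpolants_quantitative_bound
    {Ω : Type*} [MetricSpace Ω] [MeasurableSpace Ω] [BorelSpace Ω] (μ : Measure Ω)
    (hμpos : ∀ U : Set Ω, IsOpen U → U.Nonempty → 0 < μ U)
    (Ωm : ℕ → Set Ω) (hΩcpt : ∀ m, IsCompact (Ωm m)) (hΩmono : Monotone Ωm)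
    (hΩfin : ∀ m, μ (Ωm m) < ⊤) (hΩunion : (⋃ m, Ωm m) = Set.univ)
    (φ : ℕ → Ω → ℝ) (hφcont : ∀ k, Continuous (φ k))
    (hortho : ∀ j k, ∫ x, φ j x * φ k x ∂μ = if j = k then 1 else 0)
    (ω : ℕ → ℝ) (hωpos : ∀ k, 0 < ω k) (hωtop : Tendsto ω atTop atTop)
    (K : Ω → Ω → ℝ)
    (hKabs : ∀ x y : Ω, Summable fun k => |(ω k)⁻¹ * φ k x * φ k y|)
    (hKsum : ∀ x y : Ω, HasSum (fun k => (ω k)⁻¹ * φ k x * φ k y) (K x y))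
    (hKunif : TendstoUniformly (fun p (z : Ω × Ω) => Kpart ω φ p z.1 z.2)
      (fun z => K z.1 z.2) atTop)
    (hKbdd : ∃ M : ℝ, ∀ x y : Ω, |K x y| ≤ M)
    (hKcont : Continuous fun z : Ω × Ω => K z.1 z.2)
    (hKL2 : MemLp (fun z : Ω × Ω => K z.1 z.2) 2 (μ.prod μ))
    {n : ℕ} (X : Fin n → Ω) (hXinj : Function.Injective X)
    (pX : ℕ)
    (hpX : ∀ y : Fin n → ℝ, ∃ c : ℕ → ℝ, ∀ j, ∑ k ∈ Finset.range pX, c k * φ k (X j) = y j)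
    (y : Fin n → ℝ) :
    ∀ p : ℕ, pX ≤ p → ∀ q : ℝ≥0∞, 2 ≤ q →
      eLpNorm (fun x => interpP ω φ X y p x - interpInf K X y x) q μ ≤
        ENNReal.ofReal
          ((CK K) ^ ((1 - 1/q).toReal) * (⨆ k : ℕ, (ω k)⁻¹) ^ ((1/q).toReal) *
              (n : ℝ) ^ ((3 : ℝ)/2) * alphaP K ω φ p *
              specNorm ((KpartMat ω φ X p)⁻¹) * specNorm ((KMat K X)⁻¹) * vecNorm y +
            (alphaP K ω φ p) ^ ((1 - 1/q).toReal) * (⨆ k : ℕ, (ω (p + k))⁻¹) ^ ((1/q).toReal) *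
              (n : ℝ) ^ ((1 : ℝ)/2) * specNorm ((KpartMat ω φ X p)⁻¹) * vecNorm y) :=
  min_norm_interpolants_quantitative_bound_general μ φ hφcont hortho ω hωpos hωtop K hKsum hKbdd X
    pX hpX y
end
end

section
/- Suppose Φ and ω are compatible and every finite subset of Ω is a sampling set for Φ. Then the kernel K = K_{Φ,ω} is strictly positive-definite on Ω: for every finite set of distinct points {x_1,…,x_n} ⊂ Ω and every nonzero c ∈ ℝⁿ, Σ_{j=1}^n Σ_{k=1}^n K(x_j,x_k) c_j c_k > 0. -/
open MeasureTheory Filter Finset Matrix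
open scoped ENNReal BigOperators

noncomputable section

/-! The quadratic form equals the series `∑ₖ ωₖ⁻¹ (∑ⱼ cⱼ φₖ(xⱼ))²` of nonnegative terms. If every
term vanished, `c` would be orthogonal to all vectors `(φₖ(xⱼ))ⱼ`, which span `ℝⁿ` because the
points form a sampling set; so `c = 0`. -/

section

variable {Ω ι : Type*} [Fintype ι]

theorem hasSum_quadraticForm_of_hasSum_kernel {w : ℕ → ℝ} {φ : ℕ → Ω → ℝ} {K : Ω → Ω → ℝ}
    (hK : ∀ x y, HasSum (fun k => w k * φ k x * φ k y) (K x y)) (x : ι → Ω) (c : ι → ℝ) :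
    HasSum (fun k => w k * (∑ j, c j * φ k (x j)) ^ 2)
      (∑ j, ∑ l, K (x j) (x l) * c j * c l) := by
  have hterms : HasSum (fun k => ∑ j, ∑ l, w k * φ k (x j) * φ k (x l) * c j * c l)
      (∑ j, ∑ l, K (x j) (x l) * c j * c l) :=
    hasSum_sum fun j _ => hasSum_sum fun l _ => ((hK _ _).mul_right (c j)).mul_right (c l)
  convert hterms using 2 with k
  rw [sq, sum_mul_sum, mul_sum]
  exact sum_congr rfl fun j _ => by rw [mul_sum]; exact sum_congr rfl fun l _ => by ring

theorem eq_zero_of_forall_dotProduct_eq_zero_of_spans {v : ℕ → ι → ℝ} {p : ℕ}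
    (hspan : ∀ y : ι → ℝ, ∃ a : ℕ → ℝ, ∀ j, ∑ k ∈ range p, a k * v k j = y j)
    {c : ι → ℝ} (hc : ∀ k, c ⬝ᵥ v k = 0) : c = 0 := by
  obtain ⟨a, ha⟩ := hspan c
  have hcc : c ⬝ᵥ c = 0 :=
    calc c ⬝ᵥ c = ∑ j, c j * ∑ k ∈ range p, a k * v k j := by
          simp only [dotProduct, ha]
      _ = ∑ k ∈ range p, a k * c ⬝ᵥ v k := by
          simp only [dotProduct, mul_sum]
          rw [sum_comm]
          exact sum_congr rfl fun k _ => sum_congr rfl fun j _ => by ring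
      _ = 0 := by simp [hc]
  exact dotProduct_self_eq_zero.mp hcc

end

theorem kernel_strictly_positive_definite_general
    {Ω : Type*}
    (φ : ℕ → Ω → ℝ)
    (ω : ℕ → ℝ) (hωpos : ∀ k, 0 < ω k)
    (K : Ω → Ω → ℝ)
    (hKsum : ∀ x y : Ω, HasSum (fun k => (ω k)⁻¹ * φ k x * φ k y) (K x y))
    (hsamp : ∀ (n : ℕ) (x : Fin n → Ω), Function.Injective x →
      ∃ p : ℕ, ∀ y : Fin n → ℝ, ∃ c : ℕ → ℝ, ∀ j, ∑ k ∈ Finset.range p, c k * φ k (x j) = y j) :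
    ∀ (n : ℕ) (x : Fin n → Ω), Function.Injective x → ∀ c : Fin n → ℝ, c ≠ 0 →
      0 < ∑ j, ∑ k, K (x j) (x k) * c j * c k := by
  intro n x hinj c hc
  obtain ⟨p, hspan⟩ := hsamp n x hinj
  obtain ⟨m, hm⟩ : ∃ m, c ⬝ᵥ (fun j => φ m (x j)) ≠ 0 := by
    by_contra! h
    exact hc (eq_zero_of_forall_dotProduct_eq_zero_of_spans hspan h)
  have hS := hasSum_quadraticForm_of_hasSum_kernel hKsum x c
  rw [← hS.tsum_eq]
  exact hS.summable.tsum_pos (fun k => by have := hωpos k; positivity) m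
    (mul_pos (inv_pos.mpr (hωpos m)) (sq_pos_of_ne_zero hm))

/-- If `Φ` and `ω` are compatible and every finite subset of `Ω` is a sampling
set for `Φ`, then `K = K_{Φ,ω}` is strictly positive-definite on `Ω`. -/
theorem kernel_strictly_positive_definite
    {Ω : Type*} [MetricSpace Ω] [MeasurableSpace Ω] [BorelSpace Ω] (μ : Measure Ω)
    (hμpos : ∀ U : Set Ω, IsOpen U → U.Nonempty → 0 < μ U)
    (Ωm : ℕ → Set Ω) (hΩcpt : ∀ m, IsCompact (Ωm m)) (hΩmono : Monotone Ωm)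
    (hΩfin : ∀ m, μ (Ωm m) < ⊤) (hΩunion : (⋃ m, Ωm m) = Set.univ)
    (φ : ℕ → Ω → ℝ) (hφcont : ∀ k, Continuous (φ k))
    (hortho : ∀ j k, ∫ x, φ j x * φ k x ∂μ = if j = k then 1 else 0)
    (ω : ℕ → ℝ) (hωpos : ∀ k, 0 < ω k) (hωtop : Tendsto ω atTop atTop)
    (K : Ω → Ω → ℝ)
    (hKabs : ∀ x y : Ω, Summable fun k => |(ω k)⁻¹ * φ k x * φ k y|)
    (hKsum : ∀ x y : Ω, HasSum (fun k => (ω k)⁻¹ * φ k x * φ k y) (K x y))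
    (hKunif : TendstoUniformly (fun p (z : Ω × Ω) => Kpart ω φ p z.1 z.2)
      (fun z => K z.1 z.2) atTop)
    (hKbdd : ∃ M : ℝ, ∀ x y : Ω, |K x y| ≤ M)
    (hKcont : Continuous fun z : Ω × Ω => K z.1 z.2)
    (hKL2 : MemLp (fun z : Ω × Ω => K z.1 z.2) 2 (μ.prod μ))
    (hsamp : ∀ (n : ℕ) (x : Fin n → Ω), Function.Injective x →
      ∃ p : ℕ, ∀ y : Fin n → ℝ, ∃ c : ℕ → ℝ, ∀ j, ∑ k ∈ Finset.range p, c k * φ k (x j) = y j) :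
    ∀ (n : ℕ) (x : Fin n → Ω), Function.Injective x → ∀ c : Fin n → ℝ, c ≠ 0 →
      0 < ∑ j, ∑ k, K (x j) (x k) * c j * c k :=
  kernel_strictly_positive_definite_general φ ω hωpos K hKsum hsamp
end
end

section
/- Assume Φ and ω are compatible and X = {x_1,…,x_n} is a sampling set for Φ (so that 𝐊 := (K(x_i,x_j))_{i,j} is invertible). For data y ∈ ℝⁿ, define f_∞(x) := Σ_{k=1}^n K(x,x_k)(𝐊⁻¹ y)_k. Then f_∞ interpolates (X,y), its coefficient sequence c∞ (where f_∞ = Σ_k (c∞)_k φ_k) satisfies Σ_k ω_k (c∞)_k² < ∞, and f_∞ has minimum weighted norm: for every real sequence c with Σ_k ω_k c_k² < ∞ such that the function g(x) := Σ_k c_k φ_k(x) (the series converges absolutely at every x ∈ Ω) satisfies g(x_j) = y_j for all j, one has Σ_k ω_k (c∞)_k² ≤ Σ_k ω_k c_k². -/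
open MeasureTheory Filter Finset Matrix
open scoped ENNReal BigOperators

noncomputable section

/-- Coefficient sequence of `f_∞`: `(c∞)_k = ω_k⁻¹ ∑_j φ_k(x_j) (𝐊⁻¹ y)_j`. -/
def coefInf {Ω : Type*} (K : Ω → Ω → ℝ) (ω : ℕ → ℝ) (φ : ℕ → Ω → ℝ) {n : ℕ}
    (X : Fin n → Ω) (y : Fin n → ℝ) (k : ℕ) : ℝ :=
  (ω k)⁻¹ * ∑ j, φ k (X j) * ((KMat K X)⁻¹ *ᵥ y) j

/-!
Expanding the kernel gives `𝐊 = ∑_k ω_k⁻¹ φ_k(X) φ_k(X)ᵀ`, so `vᵀ𝐊v = ∑_k ω_k⁻¹ (Φ_Xᵀ v)_k²`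
vanishes only when `Φ_Xᵀ v = 0`; since `X` is a sampling set this forces `v = 0`, so `𝐊` is
positive definite. With `a = 𝐊⁻¹ y` we have `c∞ = ω⁻¹ Φ_Xᵀ a`, and for every interpolant `c` the
weighted inner product `∑_k ω_k c∞_k c_k` equals `a ⬝ᵥ y = ∑_k ω_k c∞_k²`. Hence
`∑ ω c² = ∑ ω (c - c∞)² + ∑ ω c∞² ≥ ∑ ω c∞²`.
-/

theorem weighted_sq_le_tsum_of_hasSum_inner {κ : Type*} {w a c : κ → ℝ} {s : ℝ}
    (hw : ∀ k, 0 ≤ w k) (ha : HasSum (fun k => w k * a k ^ 2) s)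
    (hac : HasSum (fun k => w k * a k * c k) s) (hc : Summable fun k => w k * c k ^ 2) :
    s ≤ ∑' k, w k * c k ^ 2 := by
  have hdiff : HasSum (fun k => w k * (c k - a k) ^ 2) (∑' k, w k * c k ^ 2 - 2 * s + s) := by
    refine ((hc.hasSum.sub (hac.mul_left 2)).add ha).congr_fun fun k => ?_
    ring
  linarith [hdiff.nonneg fun k => mul_nonneg (hw k) (sq_nonneg _)]

theorem inv_mul_mul_self_nonneg_s4 {a : ℝ} (ha : 0 < a) (b : ℝ) : 0 ≤ a⁻¹ * b * b := by
  rw [mul_assoc]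
  exact mul_nonneg (inv_pos.2 ha).le (mul_self_nonneg b)

theorem Matrix.mulVec_nonsing_inv_mulVec {ι α : Type*} [Fintype ι] [DecidableEq ι] [CommRing α]
    {M : Matrix ι ι α} (hM : IsUnit M) (y : ι → α) : M *ᵥ (M⁻¹ *ᵥ y) = y := by
  rw [mulVec_mulVec, mul_nonsing_inv _ ((isUnit_iff_isUnit_det _).mp hM), one_mulVec]

section KernelExpansion

variable {Ω κ : Type*} {ω : κ → ℝ} {φ : κ → Ω → ℝ} {K : Ω → Ω → ℝ} {n : ℕ}

/-- `Φ_Xᵀ v` for the sampling matrix `Φ_X = (φ_k(x_j))_{j,k}`; thus `c∞ = ω⁻¹ Φ_Xᵀ 𝐊⁻¹ y`. -/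
def sampledTranspose (φ : κ → Ω → ℝ) (X : Fin n → Ω) (v : Fin n → ℝ) (k : κ) : ℝ :=
  ∑ j, φ k (X j) * v j

theorem hasSum_sampledTranspose_mul {X : Fin n → Ω} {c : κ → ℝ} {y : Fin n → ℝ}
    (hc : ∀ j, HasSum (fun k => c k * φ k (X j)) (y j)) (v : Fin n → ℝ) :
    HasSum (fun k => sampledTranspose φ X v k * c k) (v ⬝ᵥ y) := by
  refine (hasSum_sum fun j (_ : j ∈ univ) => (hc j).mul_left (v j)).congr_fun fun k => ?_
  simp only [sampledTranspose, Finset.sum_mul]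
  exact Finset.sum_congr rfl fun j _ => by ring

theorem hasSum_inv_mul_sampledTranspose
    (hK : ∀ x y, HasSum (fun k => (ω k)⁻¹ * φ k x * φ k y) (K x y))
    (X : Fin n → Ω) (v : Fin n → ℝ) (x : Ω) :
    HasSum (fun k => (ω k)⁻¹ * φ k x * sampledTranspose φ X v k) (∑ j, K x (X j) * v j) := by
  refine (hasSum_sum fun j (_ : j ∈ univ) => (hK x (X j)).mul_right (v j)).congr_fun fun k => ?_
  simp only [sampledTranspose, Finset.mul_sum, mul_assoc]

theorem hasSum_inv_mul_sampledTranspose_mul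
    (hK : ∀ x y, HasSum (fun k => (ω k)⁻¹ * φ k x * φ k y) (K x y))
    (X : Fin n → Ω) (v w : Fin n → ℝ) :
    HasSum (fun k => (ω k)⁻¹ * sampledTranspose φ X v k * sampledTranspose φ X w k)
      (v ⬝ᵥ (KMat K X *ᵥ w)) := by
  refine (hasSum_sum fun i (_ : i ∈ univ) =>
    (hasSum_inv_mul_sampledTranspose hK X w (X i)).mul_left (v i)).congr_fun fun k => ?_
  simp only [sampledTranspose]
  rw [mul_comm (ω k)⁻¹, mul_assoc, Finset.sum_mul]
  exact Finset.sum_congr rfl fun i _ => by ring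

theorem KMat_isHermitian (hK : ∀ x y, HasSum (fun k => (ω k)⁻¹ * φ k x * φ k y) (K x y))
    (X : Fin n → Ω) : (KMat K X).IsHermitian := by
  ext i j
  simp only [conjTranspose_apply, star_trivial, KMat, of_apply]
  exact (hK (X j) (X i)).unique (by simpa only [mul_right_comm] using hK (X i) (X j))

theorem sampledTranspose_eq_zero_of_dotProduct_KMat_mulVec_eq_zero (hω : ∀ k, 0 < ω k)
    (hK : ∀ x y, HasSum (fun k => (ω k)⁻¹ * φ k x * φ k y) (K x y))
    (X : Fin n → Ω) {v : Fin n → ℝ} (hv : v ⬝ᵥ (KMat K X *ᵥ v) = 0) (k : κ) :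
    sampledTranspose φ X v k = 0 := by
  have hsum := hasSum_inv_mul_sampledTranspose_mul hK X v v
  rw [hv, hasSum_zero_iff_of_nonneg fun k => inv_mul_mul_self_nonneg_s4 (hω k) _] at hsum
  simpa [(hω k).ne'] using congrFun hsum k

theorem eq_zero_of_sampledTranspose_eq_zero {φ : ℕ → Ω → ℝ} {X : Fin n → Ω} {p : ℕ}
    (hX : ∀ y : Fin n → ℝ, ∃ c : ℕ → ℝ, ∀ j, ∑ k ∈ range p, c k * φ k (X j) = y j)
    {v : Fin n → ℝ} (hv : ∀ k, sampledTranspose φ X v k = 0) : v = 0 := by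
  obtain ⟨c, hc⟩ := hX v
  have hvv : v ⬝ᵥ v = 0 :=
    calc v ⬝ᵥ v = ∑ j, (∑ k ∈ range p, c k * φ k (X j)) * v j := by simp only [hc, dotProduct]
      _ = ∑ k ∈ range p, c k * sampledTranspose φ X v k := by
        simp only [sampledTranspose, Finset.sum_mul, Finset.mul_sum, mul_assoc]
        exact Finset.sum_comm
      _ = 0 := by simp [hv]
  exact dotProduct_self_eq_zero.mp hvv

theorem KMat_posDef {ω : ℕ → ℝ} {φ : ℕ → Ω → ℝ} (hω : ∀ k, 0 < ω k)
    (hK : ∀ x y, HasSum (fun k => (ω k)⁻¹ * φ k x * φ k y) (K x y))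
    {X : Fin n → Ω} {p : ℕ}
    (hX : ∀ y : Fin n → ℝ, ∃ c : ℕ → ℝ, ∀ j, ∑ k ∈ range p, c k * φ k (X j) = y j) :
    (KMat K X).PosDef := by
  refine posDef_iff_dotProduct_mulVec.mpr ⟨KMat_isHermitian hK X, fun v hv => ?_⟩
  have hnonneg : 0 ≤ v ⬝ᵥ (KMat K X *ᵥ v) :=
    (hasSum_inv_mul_sampledTranspose_mul hK X v v).nonneg fun k =>
      inv_mul_mul_self_nonneg_s4 (hω k) _
  refine (star_trivial v).symm ▸ hnonneg.lt_of_ne fun h => hv ?_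
  exact eq_zero_of_sampledTranspose_eq_zero hX
    (sampledTranspose_eq_zero_of_dotProduct_KMat_mulVec_eq_zero hω hK X h.symm)

end KernelExpansion

section Interpolant

variable {Ω : Type*} {φ : ℕ → Ω → ℝ} {ω : ℕ → ℝ} {K : Ω → Ω → ℝ} {n : ℕ} {X : Fin n → Ω}

theorem interpInf_apply_sample (hK : IsUnit (KMat K X)) (y : Fin n → ℝ) (i : Fin n) :
    interpInf K X y (X i) = y i :=
  congrFun (mulVec_nonsing_inv_mulVec hK y) i

theorem hasSum_coefInf_mul (hKsum : ∀ x y, HasSum (fun k => (ω k)⁻¹ * φ k x * φ k y) (K x y))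
    (y : Fin n → ℝ) (x : Ω) :
    HasSum (fun k => coefInf K ω φ X y k * φ k x) (interpInf K X y x) :=
  (hasSum_inv_mul_sampledTranspose hKsum X _ x).congr_fun fun _ => mul_right_comm _ _ _

theorem hasSum_weight_mul_coefInf_sq (hω : ∀ k, 0 < ω k)
    (hKsum : ∀ x y, HasSum (fun k => (ω k)⁻¹ * φ k x * φ k y) (K x y))
    (hK : IsUnit (KMat K X)) (y : Fin n → ℝ) :
    HasSum (fun k => ω k * coefInf K ω φ X y k ^ 2) (((KMat K X)⁻¹ *ᵥ y) ⬝ᵥ y) := by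
  have h := hasSum_inv_mul_sampledTranspose_mul hKsum X ((KMat K X)⁻¹ *ᵥ y) ((KMat K X)⁻¹ *ᵥ y)
  rw [mulVec_nonsing_inv_mulVec hK] at h
  refine h.congr_fun fun k => ?_
  simp only [coefInf, sampledTranspose]
  field_simp [(hω k).ne']

theorem hasSum_weight_mul_coefInf_mul (hω : ∀ k, 0 < ω k) {c : ℕ → ℝ} {y : Fin n → ℝ}
    (hc : ∀ j, HasSum (fun k => c k * φ k (X j)) (y j)) :
    HasSum (fun k => ω k * coefInf K ω φ X y k * c k) (((KMat K X)⁻¹ *ᵥ y) ⬝ᵥ y) := by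
  refine (hasSum_sampledTranspose_mul hc _).congr_fun fun k => ?_
  rw [coefInf, ← mul_assoc, mul_inv_cancel₀ (hω k).ne', one_mul]
  rfl

end Interpolant

theorem interpInf_is_min_weighted_norm_interpolant_general
    {Ω : Type*}
    (φ : ℕ → Ω → ℝ)
    (ω : ℕ → ℝ) (hωpos : ∀ k, 0 < ω k)
    (K : Ω → Ω → ℝ)
    (hKsum : ∀ x y : Ω, HasSum (fun k => (ω k)⁻¹ * φ k x * φ k y) (K x y))
    {n : ℕ} (X : Fin n → Ω)
    (pX : ℕ)
    (hpX : ∀ y : Fin n → ℝ, ∃ c : ℕ → ℝ, ∀ j, ∑ k ∈ Finset.range pX, c k * φ k (X j) = y j)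
    (y : Fin n → ℝ) :
    (∀ j, interpInf K X y (X j) = y j) ∧
    (∀ x : Ω, HasSum (fun k => coefInf K ω φ X y k * φ k x) (interpInf K X y x)) ∧
    Summable (fun k => ω k * (coefInf K ω φ X y k) ^ 2) ∧
    (∀ c : ℕ → ℝ, Summable (fun k => ω k * (c k) ^ 2) →
      (∀ x : Ω, Summable fun k => |c k * φ k x|) →
      (∀ j, ∑' k, c k * φ k (X j) = y j) →
      ∑' k, ω k * (coefInf K ω φ X y k) ^ 2 ≤ ∑' k, ω k * (c k) ^ 2) := by
  have hK : IsUnit (KMat K X) := (KMat_posDef hωpos hKsum hpX).isUnit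
  have hnorm := hasSum_weight_mul_coefInf_sq hωpos hKsum hK y
  refine ⟨interpInf_apply_sample hK y, hasSum_coefInf_mul hKsum y, hnorm.summable,
    fun c hc habs hinterp => ?_⟩
  have hc_samples : ∀ j, HasSum (fun k => c k * φ k (X j)) (y j) := fun j =>
    hinterp j ▸ (habs (X j)).of_abs.hasSum
  rw [hnorm.tsum_eq]
  exact weighted_sq_le_tsum_of_hasSum_inner (fun k => (hωpos k).le) hnorm
    (hasSum_weight_mul_coefInf_mul hωpos hc_samples) hc

/-- The limiting interpolant `f_∞` interpolates `(X,y)`, its coefficient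
sequence `c∞` has finite weighted norm `∑ ω_k (c∞)_k² < ∞`, and it has minimum weighted norm
among all interpolants with absolutely convergent expansions of finite weighted norm. -/
theorem interpInf_is_min_weighted_norm_interpolant
    {Ω : Type*} [MetricSpace Ω] [MeasurableSpace Ω] [BorelSpace Ω] (μ : Measure Ω)
    (hμpos : ∀ U : Set Ω, IsOpen U → U.Nonempty → 0 < μ U)
    (Ωm : ℕ → Set Ω) (hΩcpt : ∀ m, IsCompact (Ωm m)) (hΩmono : Monotone Ωm)
    (hΩfin : ∀ m, μ (Ωm m) < ⊤) (hΩunion : (⋃ m, Ωm m) = Set.univ)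
    (φ : ℕ → Ω → ℝ) (hφcont : ∀ k, Continuous (φ k))
    (hortho : ∀ j k, ∫ x, φ j x * φ k x ∂μ = if j = k then 1 else 0)
    (ω : ℕ → ℝ) (hωpos : ∀ k, 0 < ω k) (hωtop : Tendsto ω atTop atTop)
    (K : Ω → Ω → ℝ)
    (hKabs : ∀ x y : Ω, Summable fun k => |(ω k)⁻¹ * φ k x * φ k y|)
    (hKsum : ∀ x y : Ω, HasSum (fun k => (ω k)⁻¹ * φ k x * φ k y) (K x y))
    (hKunif : TendstoUniformly (fun p (z : Ω × Ω) => Kpart ω φ p z.1 z.2)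
      (fun z => K z.1 z.2) atTop)
    (hKbdd : ∃ M : ℝ, ∀ x y : Ω, |K x y| ≤ M)
    (hKcont : Continuous fun z : Ω × Ω => K z.1 z.2)
    (hKL2 : MemLp (fun z : Ω × Ω => K z.1 z.2) 2 (μ.prod μ))
    {n : ℕ} (X : Fin n → Ω) (hXinj : Function.Injective X)
    (pX : ℕ)
    (hpX : ∀ y : Fin n → ℝ, ∃ c : ℕ → ℝ, ∀ j, ∑ k ∈ Finset.range pX, c k * φ k (X j) = y j)
    (y : Fin n → ℝ) :
    (∀ j, interpInf K X y (X j) = y j) ∧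
    (∀ x : Ω, HasSum (fun k => coefInf K ω φ X y k * φ k x) (interpInf K X y x)) ∧
    Summable (fun k => ω k * (coefInf K ω φ X y k) ^ 2) ∧
    (∀ c : ℕ → ℝ, Summable (fun k => ω k * (c k) ^ 2) →
      (∀ x : Ω, Summable fun k => |c k * φ k x|) →
      (∀ j, ∑' k, c k * φ k (X j) = y j) →
      ∑' k, ω k * (coefInf K ω φ X y k) ^ 2 ≤ ∑' k, ω k * (c k) ^ 2) :=
  interpInf_is_min_weighted_norm_interpolant_general φ ω hωpos K hKsum X pX hpX y
end
end

section
/- Let d ≥ 3, let a, b ∈ ℝ, and let G : [−1,1] → ℝ be an even function (G(−t) = G(t) for all t). Define the inner product kernel K(x,y) := a + b (x·y) + G(x·y) on the unit sphere 𝕊^{d−1} ⊂ ℝ^d. Then K is not strictly positive-definite on 𝕊^{d−1}: there exist an integer n > d, distinct points x_1,…,x_{2n} ∈ 𝕊^{d−1}, and a nonzero vector u ∈ ℝ^{2n} such that Σ_{j=1}^{2n} Σ_{k=1}^{2n} K(x_j,x_k) u_j u_k = 0. In particular, the neural tangent kernel of a two-layer ReLU network, whose spherical harmonic expansion involves only the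 degrees ℓ = 0, ℓ = 1, and even ℓ ≥ 2, is of this form and hence is not strictly positive-definite on 𝕊^{d−1}. -/
open Finset
open scoped BigOperators RealInnerProductSpace

noncomputable section

/-!
Take `d + 1` unit vectors `c p` in `ℝ^d`, no two equal or antipodal; being too many, they satisfy a
nontrivial relation `∑ v p • c p = 0`. On the symmetric configuration `±c p` with the odd weights
`±v p`, the terms `a + G(x·y)` of the kernel cancel in pairs (as `G` is even), while the linear term
contributes `4 b ‖∑ v p • c p‖² = 0`.
-/

section Antipodal

variable {E ι : Type*} [NormedAddCommGroup E] [InnerProductSpace ℝ E] [Fintype ι]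

theorem sum_sum_kernel_antipodal (f : ℝ → ℝ) (c : ι → E) (v : ι → ℝ) :
    ∑ s, ∑ t, f ⟪Sum.elim c (-c) s, Sum.elim c (-c) t⟫ * Sum.elim v (-v) s * Sum.elim v (-v) t =
      2 * ∑ p, ∑ q, (f ⟪c p, c q⟫ - f (-⟪c p, c q⟫)) * v p * v q := by
  simp only [Fintype.sum_sum_type, Sum.elim_inl, Sum.elim_inr, Pi.neg_apply, inner_neg_left,
    inner_neg_right, neg_neg, mul_sum, ← sum_add_distrib]
  refine sum_congr rfl fun p _ => sum_congr rfl fun q _ => ?_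
  ring

theorem sum_sum_kernel_antipodal_eq_zero (a b : ℝ) (G : ℝ → ℝ)
    (hG : ∀ t ∈ Set.Icc (-1 : ℝ) 1, G (-t) = G t) {c : ι → E} (hc : ∀ p, ‖c p‖ ≤ 1) {v : ι → ℝ}
    (hv : ∑ p, v p • c p = 0) :
    ∑ s, ∑ t, (a + b * ⟪Sum.elim c (-c) s, Sum.elim c (-c) t⟫ +
      G ⟪Sum.elim c (-c) s, Sum.elim c (-c) t⟫) * Sum.elim v (-v) s * Sum.elim v (-v) t = 0 := by
  have hodd : ∀ p q, a + b * ⟪c p, c q⟫ + G ⟪c p, c q⟫ - (a + b * -⟪c p, c q⟫ + G (-⟪c p, c q⟫)) =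
      2 * b * ⟪c p, c q⟫ := by
    intro p q
    have hmem : ⟪c p, c q⟫ ∈ Set.Icc (-1 : ℝ) 1 := by
      refine abs_le.mp ((abs_real_inner_le_norm _ _).trans ?_)
      nlinarith [hc p, hc q, norm_nonneg (c p), norm_nonneg (c q)]
    rw [hG _ hmem]
    ring
  calc _ = 2 * ∑ p, ∑ q, 2 * b * ⟪c p, c q⟫ * v p * v q := by
        rw [sum_sum_kernel_antipodal (fun r => a + b * r + G r) c v]
        simp only [hodd]
    _ = 4 * b * ⟪∑ p, v p • c p, ∑ q, v q • c q⟫ := by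
        rw [sum_inner]
        simp only [inner_sum, real_inner_smul_left, real_inner_smul_right, mul_sum]
        refine sum_congr rfl fun p _ => sum_congr rfl fun q _ => ?_
        ring
    _ = 0 := by rw [hv, inner_zero_left, mul_zero]

end Antipodal

section Coordinates

variable {ι : Type*}

theorem injective_sum_elim_neg_of_pos_coord {κ : Type*} {x : κ → EuclideanSpace ℝ ι}
    (hx : Function.Injective x) (i : ι) (hpos : ∀ p, 0 < x p i) :
    Function.Injective (Sum.elim x (-x)) := by
  have h_not_antipodal : ∀ p q, x p ≠ -x q := fun p q h => by
    have h_i := congrArg (fun z : EuclideanSpace ℝ ι => z i) h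
    simp only [PiLp.neg_apply] at h_i
    linarith [hpos p, hpos q]
  rintro (p | p) (q | q) h <;> simp only [Sum.elim_inl, Sum.elim_inr, Pi.neg_apply] at h
  · exact congrArg Sum.inl (hx h)
  · exact (h_not_antipodal p q h).elim
  · exact (h_not_antipodal q p h.symm).elim
  · exact congrArg Sum.inr (hx (neg_injective h))

variable [Fintype ι] [DecidableEq ι]

theorem exists_unit_vectors_injective_pos_coord {i j : ι} (hij : i ≠ j) :
    ∃ x : ℝ → EuclideanSpace ℝ ι, (∀ t, ‖x t‖ = 1) ∧ Function.Injective x ∧ ∀ t, 0 < x t i := by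
  set y : ℝ → EuclideanSpace ℝ ι := fun t =>
    EuclideanSpace.single i 1 + t • EuclideanSpace.single j 1
  have hy_i : ∀ t, y t i = 1 := fun t => by simp [y, hij.symm]
  have hy_j : ∀ t, y t j = t := fun t => by simp [y, hij]
  have hy : ∀ t, y t ≠ 0 := fun t h => by simpa [h] using hy_i t
  have hr : ∀ t, 0 < ‖y t‖⁻¹ := fun t => inv_pos.mpr (norm_pos_iff.mpr (hy t))
  refine ⟨fun t => ‖y t‖⁻¹ • y t, fun t => norm_smul_inv_norm (hy t), fun t s h => ?_,
    fun t => by simpa [hy_i] using hr t⟩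
  have h_i : ‖y t‖⁻¹ = ‖y s‖⁻¹ := by simpa [hy_i] using congrArg (· i) h
  have h_j : ‖y t‖⁻¹ * t = ‖y s‖⁻¹ * s := by simpa [hy_j] using congrArg (· j) h
  rw [h_i] at h_j
  exact mul_left_cancel₀ (hr s).ne' h_j

end Coordinates

/-- An inner-product kernel on the sphere of the form
`K(x,y) = a + b (x·y) + G(x·y)` with `G` even is not strictly positive-definite on `𝕊^{d−1}`:
there are an integer `n > d`, distinct points `x_1,…,x_{2n}` on the sphere, and a nonzero vector
`u` whose kernel quadratic form vanishes. (The two-layer ReLU neural tangent kernel is of this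
form.) -/
theorem inner_product_kernel_not_strictly_positive_definite
    (d : ℕ) (hd : 3 ≤ d) (a b : ℝ) (G : ℝ → ℝ)
    (hG : ∀ t ∈ Set.Icc (-1 : ℝ) 1, G (-t) = G t) :
    ∃ n : ℕ, d < n ∧
      ∃ x : Fin (2 * n) → EuclideanSpace ℝ (Fin d),
        (∀ j, ‖x j‖ = 1) ∧ Function.Injective x ∧
        ∃ u : Fin (2 * n) → ℝ, u ≠ 0 ∧
          ∑ j, ∑ k, (a + b * ⟪x j, x k⟫ + G ⟪x j, x k⟫) * u j * u k = 0 := by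
  obtain ⟨y, hy_norm, hy_inj, hy_pos⟩ :=
    exists_unit_vectors_injective_pos_coord (i := (⟨0, by omega⟩ : Fin d)) (j := ⟨1, by omega⟩)
      (by simp)
  set c : Fin (d + 1) → EuclideanSpace ℝ (Fin d) := fun p => y (p : ℕ)
  have hc_inj : Function.Injective c := hy_inj.comp (Nat.cast_injective.comp Fin.val_injective)
  have hc_dep : ¬LinearIndependent ℝ c := fun h => by simpa using h.fintype_card_le_finrank
  obtain ⟨v, hv, p, hvp⟩ := Fintype.not_linearIndependent_iff.mp hc_dep
  let e : Fin (2 * (d + 1)) ≃ Fin (d + 1) ⊕ Fin (d + 1) :=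
    (finCongr (two_mul _)).trans finSumFinEquiv.symm
  have hX_norm : ∀ s, ‖Sum.elim c (-c) s‖ = 1 := by rintro (q | q) <;> simp [c, hy_norm]
  refine ⟨d + 1, d.lt_succ_self, Sum.elim c (-c) ∘ e, fun k => hX_norm (e k),
    (injective_sum_elim_neg_of_pos_coord hc_inj _ fun _ => hy_pos _).comp e.injective,
    Sum.elim v (-v) ∘ e, fun h => hvp (by simpa using congrFun h (e.symm (Sum.inl p))), ?_⟩
  rw [← sum_sum_kernel_antipodal_eq_zero a b G hG (fun q => (hy_norm _).le) hv]
  exact Fintype.sum_equiv e _ _ fun j => Fintype.sum_equiv e _ _ fun k => rfl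
end
end
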